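/- arXiv:2110.06700 — 5 statements merged into one kernel-verified Lean document; each statement's English description precedes it below -/
import Mathlib

section
/- Let n, p be positive integers, σ ≠ 0 a real number, Ω a symmetric positive definite n×n real matrix, and V a symmetric invertible n×n real matrix with σ⁻¹Ω⁻¹ + V positive definite; let v ∈ ℝ^n, v̄ ∈ ℝ. Let A be an n×n matrix, B an n×p matrix, f̄ ∈ ℝ^n, and let l(δx,δu) = (1/2)·δxᵀ l_xx δx + δuᵀ l_ux δx + (1/2)·δuᵀ l_uu δu + l_xᵀδx + l_uᵀδu with l_xx, l_uu symmetric. Define M = (σΩ + V⁻¹)⁻¹, N = v − σMΩv, and Q_x = l_x + AᵀM f̄ + AᵀN, Q_u = l_u + BᵀN + BᵀM f̄, Q_uu = l_uu + BᵀMB, Q_ux = l_ux + BᵀMA, Q_xx = l_xx + AᵀMA. Then: (1) there is a constant c ∈ ℝ such that for all δx ∈ ℝ^n and δu ∈ ℝ^p, the minimum over x' ∈ ℝ^n of l(δx,δu) + (1/2)·x'ᵀVx' + vᵀx' + v̄ + (2σ)⁻¹·(x' − Aδx − Bδu − f̄)ᵀΩ⁻¹(x' − Aδx − Bδu − f̄)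 equals (1/2)·δxᵀQ_xx δx + δuᵀQ_ux δx + (1/2)·δuᵀQ_uu δu + Q_xᵀδx + Q_uᵀδu + c; and (2) if in addition Q_uu is positive definite, then for each δx the unique minimizer of this expression over δu is δu* = −Q_uu⁻¹Q_u − Q_uu⁻¹Q_ux·δx. -/
/-!
Write `P = σ⁻¹Ω⁻¹`, `H = P + V` and `w = Aδx + Bδu + f̄`. As a function of the next state `x'`,
the stress is the quadratic `½ x'ᵀHx' + (v - Pw)ᵀx' + const` with `H` positive definite, so
completing the square gives its minimum over `x'` in closed form. The Woodbury-type identities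
`(P⁻¹ + V⁻¹)⁻¹ = P - PH⁻¹P` and `1 - (P⁻¹ + V⁻¹)⁻¹P⁻¹ = PH⁻¹` identify that minimum as
`l + Nᵀw + ½ wᵀMw` up to a constant, and expanding `w` yields the `Q`-function. Part (2) is
completing the square once more, now in `δu` with `Q_uu` positive definite.
-/

open Matrix

namespace Matrix

variable {ι κ μ R : Type*} [Fintype ι] [Fintype κ] [Fintype μ]

lemma IsSymm.dotProduct_mulVec_comm [CommSemiring R] {H : Matrix ι ι R} (hH : H.IsSymm)
    (x y : ι → R) : x ⬝ᵥ H *ᵥ y = y ⬝ᵥ H *ᵥ x := by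
  simpa only [hH.eq] using (dotProduct_transpose_mulVec H y x).symm

lemma dotProduct_transpose_mul_mul_mulVec [CommSemiring R] (A : Matrix ι κ R) (M : Matrix ι ι R)
    (B : Matrix ι μ R) (x : κ → R) (y : μ → R) :
    x ⬝ᵥ (Aᵀ * M * B) *ᵥ y = (A *ᵥ x) ⬝ᵥ M *ᵥ (B *ᵥ y) := by
  rw [← mulVec_mulVec, ← mulVec_mulVec, dotProduct_transpose_mulVec, dotProduct_comm]

lemma transpose_mulVec_dotProduct [CommSemiring R] (A : Matrix ι κ R) (y : ι → R) (x : κ → R) :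
    (Aᵀ *ᵥ y) ⬝ᵥ x = y ⬝ᵥ A *ᵥ x := by
  rw [dotProduct_comm, dotProduct_transpose_mulVec]

section Inverse

variable [DecidableEq ι]

lemma mulVec_neg_inv_mulVec_sub_inv_mul_mulVec [CommRing R] {Q : Matrix ι ι R}
    (hQ : IsUnit Q.det) (K : Matrix ι κ R) (a : ι → R) (x : κ → R) :
    Q *ᵥ (-(Q⁻¹ *ᵥ a) - (Q⁻¹ * K) *ᵥ x) = -(a + K *ᵥ x) := by
  rw [mulVec_sub, mulVec_neg, mulVec_mulVec, mul_nonsing_inv _ hQ, one_mulVec, mulVec_mulVec,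
    ← Matrix.mul_assoc, mul_nonsing_inv _ hQ, Matrix.one_mul, neg_add']

section

variable [CommRing R] {P V : Matrix ι ι R}

lemma inv_add_inv_inv (hP : IsUnit P.det) (hV : IsUnit V.det) :
    (P⁻¹ + V⁻¹)⁻¹ = V * (P + V)⁻¹ * P := by
  have h : P⁻¹ + V⁻¹ = P⁻¹ * (P + V) * V⁻¹ := by
    rw [Matrix.mul_add, Matrix.add_mul, nonsing_inv_mul _ hP, Matrix.one_mul,
      Matrix.mul_assoc, mul_nonsing_inv _ hV, Matrix.mul_one, add_comm]
  rw [h, mul_inv_rev, mul_inv_rev, nonsing_inv_nonsing_inv _ hP, nonsing_inv_nonsing_inv _ hV,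
    Matrix.mul_assoc]

lemma inv_add_inv_inv_eq_sub (hP : IsUnit P.det) (hV : IsUnit V.det)
    (hPV : IsUnit (P + V).det) : (P⁻¹ + V⁻¹)⁻¹ = P - P * (P + V)⁻¹ * P := by
  calc (P⁻¹ + V⁻¹)⁻¹ = ((P + V) - P) * (P + V)⁻¹ * P := by
        rw [inv_add_inv_inv hP hV, add_sub_cancel_left]
    _ = P - P * (P + V)⁻¹ * P := by
        rw [Matrix.sub_mul, Matrix.sub_mul, mul_nonsing_inv _ hPV, Matrix.one_mul]

lemma one_sub_inv_add_inv_inv_mul_inv (hP : IsUnit P.det) (hV : IsUnit V.det)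
    (hPV : IsUnit (P + V).det) : 1 - (P⁻¹ + V⁻¹)⁻¹ * P⁻¹ = P * (P + V)⁻¹ := by
  calc 1 - (P⁻¹ + V⁻¹)⁻¹ * P⁻¹ = (P + V) * (P + V)⁻¹ - V * (P + V)⁻¹ := by
        rw [inv_add_inv_inv hP hV, Matrix.mul_assoc, Matrix.mul_assoc, mul_nonsing_inv _ hP,
          Matrix.mul_one, mul_nonsing_inv _ hPV]
    _ = P * (P + V)⁻¹ := by rw [← Matrix.sub_mul, add_sub_cancel_right]

end

variable [Field R] {σ : R} {Ω V : Matrix ι ι R}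

lemma smul_mul_inv_smul_inv (hσ : σ ≠ 0) (hΩ : IsUnit Ω.det) :
    (σ • Ω) * (σ⁻¹ • Ω⁻¹) = 1 := by
  rw [smul_mul_smul_comm, mul_inv_cancel₀ hσ, mul_nonsing_inv _ hΩ, one_smul]

lemma inv_smul_add_inv_eq_sub (hσ : σ ≠ 0) (hΩ : IsUnit Ω.det) (hV : IsUnit V.det)
    (hH : IsUnit (σ⁻¹ • Ω⁻¹ + V).det) :
    (σ • Ω + V⁻¹)⁻¹ = σ⁻¹ • Ω⁻¹ - (σ⁻¹ • Ω⁻¹) * (σ⁻¹ • Ω⁻¹ + V)⁻¹ * (σ⁻¹ • Ω⁻¹) := by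
  have hΩP := smul_mul_inv_smul_inv hσ hΩ
  rw [← inv_eq_left_inv hΩP]
  exact inv_add_inv_inv_eq_sub (isUnit_det_of_left_inverse hΩP) hV hH

lemma sub_smul_inv_smul_add_inv_mul_mulVec (hσ : σ ≠ 0) (hΩ : IsUnit Ω.det) (hV : IsUnit V.det)
    (hH : IsUnit (σ⁻¹ • Ω⁻¹ + V).det) (v : ι → R) :
    v - σ • (((σ • Ω + V⁻¹)⁻¹ * Ω) *ᵥ v) = ((σ⁻¹ • Ω⁻¹) * (σ⁻¹ • Ω⁻¹ + V)⁻¹) *ᵥ v := by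
  have hΩP := smul_mul_inv_smul_inv hσ hΩ
  rw [← smul_mulVec, ← Matrix.mul_smul, ← inv_eq_left_inv hΩP,
    ← one_sub_inv_add_inv_inv_mul_inv (isUnit_det_of_left_inverse hΩP) hV hH, sub_mulVec,
    one_mulVec]

end Inverse

section Quadratic

variable {H : Matrix ι ι ℝ} {b x₀ : ι → ℝ}

noncomputable def quadraticFn (H : Matrix ι ι ℝ) (b x : ι → ℝ) : ℝ :=
  1 / 2 * (x ⬝ᵥ H *ᵥ x) + b ⬝ᵥ x

lemma quadraticFn_eq_half_dotProduct_of_mulVec_eq_neg (hx₀ : H *ᵥ x₀ = -b) :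
    quadraticFn H b x₀ = 1 / 2 * (b ⬝ᵥ x₀) := by
  rw [quadraticFn, hx₀, dotProduct_neg, dotProduct_comm]
  ring

lemma quadraticFn_eq_add_of_mulVec_eq_neg (hH : H.IsSymm) (hx₀ : H *ᵥ x₀ = -b) (x : ι → ℝ) :
    quadraticFn H b x = quadraticFn H b x₀ + 1 / 2 * ((x - x₀) ⬝ᵥ H *ᵥ (x - x₀)) := by
  have hx : x ⬝ᵥ H *ᵥ x₀ = -(b ⬝ᵥ x) := by rw [hx₀, dotProduct_neg, dotProduct_comm]
  rw [quadraticFn_eq_half_dotProduct_of_mulVec_eq_neg hx₀, quadraticFn, mulVec_sub, dotProduct_sub, sub_dotProduct,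
    sub_dotProduct, hH.dotProduct_mulVec_comm x₀ x, hx, hx₀, dotProduct_neg, dotProduct_comm x₀]
  ring

lemma isLeast_range_of_eq_add_half_dotProduct_mulVec {f : (ι → ℝ) → ℝ} {a : ℝ}
    (hH : H.PosSemidef) (hf : ∀ x, f x = a + 1 / 2 * ((x - x₀) ⬝ᵥ H *ᵥ (x - x₀))) :
    IsLeast (Set.range f) a := by
  refine ⟨⟨x₀, by simp [hf]⟩, ?_⟩
  rintro _ ⟨x, rfl⟩
  have hx := hH.dotProduct_mulVec_nonneg (x - x₀)
  rw [star_trivial] at hx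
  rw [hf]
  linarith

lemma quadraticFn_lt_of_posDef (hH : H.PosDef) (hx₀ : H *ᵥ x₀ = -b) {x : ι → ℝ} (hx : x ≠ x₀) :
    quadraticFn H b x₀ < quadraticFn H b x := by
  have hpos := hH.dotProduct_mulVec_pos (sub_ne_zero.mpr hx)
  rw [star_trivial] at hpos
  rw [quadraticFn_eq_add_of_mulVec_eq_neg (isHermitian_iff_isSymm.mp hH.isHermitian) hx₀ x]
  linarith

/-- Completing the square in `x`: the minimum over `x` is again a quadratic in `w`. -/
lemma quadraticFn_add_half_dotProduct_mulVec_sub [DecidableEq ι] {P V : Matrix ι ι ℝ}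
    (hP : P.IsSymm) (hH : (P + V).IsSymm) (hH_det : IsUnit (P + V).det) (v w x : ι → ℝ) :
    quadraticFn V v x + 1 / 2 * ((x - w) ⬝ᵥ P *ᵥ (x - w))
      = (((P * (P + V)⁻¹) *ᵥ v) ⬝ᵥ w + 1 / 2 * (w ⬝ᵥ (P - P * (P + V)⁻¹ * P) *ᵥ w)
          - 1 / 2 * (v ⬝ᵥ (P + V)⁻¹ *ᵥ v))
        + 1 / 2 * ((x - (P + V)⁻¹ *ᵥ (P *ᵥ w - v)) ⬝ᵥ (P + V) *ᵥ
            (x - (P + V)⁻¹ *ᵥ (P *ᵥ w - v))) := by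
  set H := P + V
  set x₀ := H⁻¹ *ᵥ (P *ᵥ w - v) with hx₀_def
  have hx₀ : H *ᵥ x₀ = -(v - P *ᵥ w) := by
    rw [mulVec_mulVec, mul_nonsing_inv _ hH_det, one_mulVec, neg_sub]
  have hHi : H⁻¹.IsSymm := hH.inv
  have hshift : quadraticFn V v x + 1 / 2 * ((x - w) ⬝ᵥ P *ᵥ (x - w))
      = quadraticFn H (v - P *ᵥ w) x + 1 / 2 * (w ⬝ᵥ P *ᵥ w) := by
    simp only [quadraticFn, H, add_mulVec, dotProduct_add, mulVec_sub, dotProduct_sub,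
      sub_dotProduct, hP.dotProduct_mulVec_comm w x]
    rw [dotProduct_comm (P *ᵥ w) x]
    ring
  have hmin : quadraticFn H (v - P *ᵥ w) x₀ + 1 / 2 * (w ⬝ᵥ P *ᵥ w)
      = ((P * H⁻¹) *ᵥ v) ⬝ᵥ w + 1 / 2 * (w ⬝ᵥ (P - P * H⁻¹ * P) *ᵥ w)
          - 1 / 2 * (v ⬝ᵥ H⁻¹ *ᵥ v) := by
    have e1 : ((P * H⁻¹) *ᵥ v) ⬝ᵥ w = v ⬝ᵥ H⁻¹ *ᵥ (P *ᵥ w) := by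
      rw [← mulVec_mulVec, dotProduct_comm, hP.dotProduct_mulVec_comm, dotProduct_comm,
        hHi.dotProduct_mulVec_comm]
    have e2 : (P *ᵥ w) ⬝ᵥ H⁻¹ *ᵥ v = v ⬝ᵥ H⁻¹ *ᵥ (P *ᵥ w) := hHi.dotProduct_mulVec_comm _ _
    have e3 : w ⬝ᵥ (P * H⁻¹ * P) *ᵥ w = (P *ᵥ w) ⬝ᵥ H⁻¹ *ᵥ (P *ᵥ w) := by
      simpa only [hP.eq] using dotProduct_transpose_mul_mul_mulVec P H⁻¹ P w w
    rw [quadraticFn_eq_half_dotProduct_of_mulVec_eq_neg hx₀, hx₀_def, mulVec_sub, dotProduct_sub, sub_dotProduct,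
      sub_dotProduct, sub_mulVec, dotProduct_sub, e1, e2, e3]
    ring
  rw [hshift, quadraticFn_eq_add_of_mulVec_eq_neg hH hx₀ x, ← hmin]
  ring

noncomputable def quadraticFn₂ (Kxx : Matrix κ κ ℝ) (Kux : Matrix μ κ ℝ) (Kuu : Matrix μ μ ℝ)
    (kx : κ → ℝ) (ku : μ → ℝ) (x : κ → ℝ) (u : μ → ℝ) : ℝ :=
  1 / 2 * (x ⬝ᵥ Kxx *ᵥ x) + u ⬝ᵥ Kux *ᵥ x + 1 / 2 * (u ⬝ᵥ Kuu *ᵥ u) + kx ⬝ᵥ x + ku ⬝ᵥ u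

lemma quadraticFn₂_eq_quadraticFn (Kxx : Matrix κ κ ℝ) (Kux : Matrix μ κ ℝ)
    (Kuu : Matrix μ μ ℝ) (kx : κ → ℝ) (ku : μ → ℝ) (x : κ → ℝ) (u : μ → ℝ) :
    quadraticFn₂ Kxx Kux Kuu kx ku x u
      = quadraticFn Kuu (ku + Kux *ᵥ x) u + (1 / 2 * (x ⬝ᵥ Kxx *ᵥ x) + kx ⬝ᵥ x) := by
  rw [quadraticFn₂, quadraticFn, add_dotProduct, dotProduct_comm (Kux *ᵥ x)]
  ring

lemma quadraticFn₂_add_comp_affine {M : Matrix ι ι ℝ} (hM : M.IsSymm) (N : ι → ℝ)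
    (A : Matrix ι κ ℝ) (B : Matrix ι μ ℝ) (f : ι → ℝ) (Kxx : Matrix κ κ ℝ) (Kux : Matrix μ κ ℝ)
    (Kuu : Matrix μ μ ℝ) (kx : κ → ℝ) (ku : μ → ℝ) (x : κ → ℝ) (u : μ → ℝ) :
    quadraticFn₂ Kxx Kux Kuu kx ku x u + (N ⬝ᵥ (A *ᵥ x + B *ᵥ u + f)
        + 1 / 2 * ((A *ᵥ x + B *ᵥ u + f) ⬝ᵥ M *ᵥ (A *ᵥ x + B *ᵥ u + f)))
      = quadraticFn₂ (Kxx + Aᵀ * M * A) (Kux + Bᵀ * M * A) (Kuu + Bᵀ * M * B)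
          (kx + Aᵀ *ᵥ (M *ᵥ f) + Aᵀ *ᵥ N) (ku + Bᵀ *ᵥ N + Bᵀ *ᵥ (M *ᵥ f)) x u
        + (N ⬝ᵥ f + 1 / 2 * (f ⬝ᵥ M *ᵥ f)) := by
  simp only [quadraticFn₂, add_mulVec, dotProduct_transpose_mul_mul_mulVec, add_dotProduct,
    transpose_mulVec_dotProduct, mulVec_add, dotProduct_add]
  rw [hM.dotProduct_mulVec_comm (A *ᵥ x) (B *ᵥ u), hM.dotProduct_mulVec_comm f (A *ᵥ x),
    hM.dotProduct_mulVec_comm f (B *ᵥ u), dotProduct_comm (M *ᵥ f), dotProduct_comm (M *ᵥ f)]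
  ring

end Quadratic

end Matrix

theorem optimal_control_deviation_general
    (n p : ℕ) (σ : ℝ) (hσ : σ ≠ 0)
    (Ω : Matrix (Fin n) (Fin n) ℝ) (hΩ_pd : Ω.PosDef)
    (V : Matrix (Fin n) (Fin n) ℝ) (hV_inv : IsUnit V.det)
    (hpd : (σ⁻¹ • Ω⁻¹ + V).PosDef)
    (v : Fin n → ℝ) (vbar : ℝ)
    (A : Matrix (Fin n) (Fin n) ℝ) (B : Matrix (Fin n) (Fin p) ℝ) (fbar : Fin n → ℝ)
    (lxx : Matrix (Fin n) (Fin n) ℝ)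
    (lux : Matrix (Fin p) (Fin n) ℝ)
    (luu : Matrix (Fin p) (Fin p) ℝ)
    (lx : Fin n → ℝ) (lu : Fin p → ℝ)
    (l : (Fin n → ℝ) → (Fin p → ℝ) → ℝ)
    (hl : ∀ δx δu, l δx δu = (1/2) * (δx ⬝ᵥ lxx *ᵥ δx) + δu ⬝ᵥ lux *ᵥ δx
        + (1/2) * (δu ⬝ᵥ luu *ᵥ δu) + lx ⬝ᵥ δx + lu ⬝ᵥ δu)
    (M : Matrix (Fin n) (Fin n) ℝ) (hM : M = (σ • Ω + V⁻¹)⁻¹)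
    (N : Fin n → ℝ) (hN : N = v - σ • ((M * Ω) *ᵥ v))
    (Qx : Fin n → ℝ) (hQx : Qx = lx + Aᵀ *ᵥ (M *ᵥ fbar) + Aᵀ *ᵥ N)
    (Qu : Fin p → ℝ) (hQu : Qu = lu + Bᵀ *ᵥ N + Bᵀ *ᵥ (M *ᵥ fbar))
    (Quu : Matrix (Fin p) (Fin p) ℝ) (hQuu : Quu = luu + Bᵀ * M * B)
    (Qux : Matrix (Fin p) (Fin n) ℝ) (hQux : Qux = lux + Bᵀ * M * A)
    (Qxx : Matrix (Fin n) (Fin n) ℝ) (hQxx : Qxx = lxx + Aᵀ * M * A)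
    -- the full one-step future stress, as a function of `δx`, `δu` and the next state `x'`
    (S : (Fin n → ℝ) → (Fin p → ℝ) → (Fin n → ℝ) → ℝ)
    (hS : ∀ δx δu x', S δx δu x' = l δx δu + (1/2) * (x' ⬝ᵥ V *ᵥ x') + v ⬝ᵥ x' + vbar
        + (2*σ)⁻¹ * ((x' - A *ᵥ δx - B *ᵥ δu - fbar) ⬝ᵥ Ω⁻¹ *ᵥ (x' - A *ᵥ δx - B *ᵥ δu - fbar)))
    -- the resulting quadratic `Q`-function in `(δx, δu)`
    (G : (Fin n → ℝ) → (Fin p → ℝ) → ℝ)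
    (hG : ∀ δx δu, G δx δu = (1/2) * (δx ⬝ᵥ Qxx *ᵥ δx) + δu ⬝ᵥ Qux *ᵥ δx
        + (1/2) * (δu ⬝ᵥ Quu *ᵥ δu) + Qx ⬝ᵥ δx + Qu ⬝ᵥ δu)
    (dustar : (Fin n → ℝ) → (Fin p → ℝ))
    (hdustar : ∀ δx, dustar δx = -(Quu⁻¹ *ᵥ Qu) - (Quu⁻¹ * Qux) *ᵥ δx) :
    (∃ c : ℝ, ∀ δx δu, IsLeast (Set.range (S δx δu)) (G δx δu + c)) ∧
    (Quu.PosDef → ∀ δx δu, δu ≠ dustar δx →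
      sInf (Set.range (S δx (dustar δx))) < sInf (Set.range (S δx δu))) := by
  have hl₂ : ∀ δx δu, l δx δu = quadraticFn₂ lxx lux luu lx lu δx δu := hl
  have hG₂ : ∀ δx δu, G δx δu = quadraticFn₂ Qxx Qux Quu Qx Qu δx δu := hG
  set P := σ⁻¹ • Ω⁻¹
  set H := P + V
  have hΩ_det : IsUnit Ω.det := (isUnit_iff_isUnit_det Ω).mp hΩ_pd.isUnit
  have hH_det : IsUnit H.det := hpd.det_pos.ne'.isUnit
  have hM' : M = P - P * H⁻¹ * P := hM ▸ inv_smul_add_inv_eq_sub hσ hΩ_det hV_inv hH_det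
  have hN' : N = (P * H⁻¹) *ᵥ v := by
    rw [hN, hM, sub_smul_inv_smul_add_inv_mul_mulVec hσ hΩ_det hV_inv hH_det]
  have hP_symm : P.IsSymm := (isHermitian_iff_isSymm.mp hΩ_pd.isHermitian).inv.smul _
  have hH_symm : H.IsSymm := isHermitian_iff_isSymm.mp hpd.isHermitian
  have hM_symm : M.IsSymm := hM' ▸ hP_symm.sub (by
    rw [IsSymm, transpose_mul, transpose_mul, hP_symm.eq, hH_symm.inv.eq, Matrix.mul_assoc])
  set c := vbar - 1 / 2 * (v ⬝ᵥ H⁻¹ *ᵥ v) + (N ⬝ᵥ fbar + 1 / 2 * (fbar ⬝ᵥ M *ᵥ fbar)) with hc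
  have hS_eq : ∀ δx δu x', S δx δu x' = G δx δu + c + 1 / 2 *
      ((x' - H⁻¹ *ᵥ (P *ᵥ (A *ᵥ δx + B *ᵥ δu + fbar) - v)) ⬝ᵥ H *ᵥ
        (x' - H⁻¹ *ᵥ (P *ᵥ (A *ᵥ δx + B *ᵥ δu + fbar) - v))) := by
    intro δx δu x'
    have hscale : ∀ y, (2 * σ)⁻¹ * (y ⬝ᵥ Ω⁻¹ *ᵥ y) = 1 / 2 * (y ⬝ᵥ P *ᵥ y) := fun y => by
      rw [smul_mulVec, dotProduct_smul, smul_eq_mul, mul_inv]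
      ring
    have hw : x' - A *ᵥ δx - B *ᵥ δu - fbar = x' - (A *ᵥ δx + B *ᵥ δu + fbar) := by abel
    have hmin := quadraticFn_add_half_dotProduct_mulVec_sub hP_symm hH_symm hH_det v
      (A *ᵥ δx + B *ᵥ δu + fbar) x'
    rw [← hM', ← hN', quadraticFn] at hmin
    have hQ := quadraticFn₂_add_comp_affine hM_symm N A B fbar lxx lux luu lx lu δx δu
    rw [hS, hw, hscale, hl₂, hG₂, hQxx, hQux, hQuu, hQx, hQu, hc]
    linarith
  have hLeast : ∀ δx δu, IsLeast (Set.range (S δx δu)) (G δx δu + c) := fun δx δu =>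
    isLeast_range_of_eq_add_half_dotProduct_mulVec hpd.posSemidef (hS_eq δx δu)
  refine ⟨⟨c, hLeast⟩, fun hQuu_pd δx δu hne => ?_⟩
  have hdustar_crit : Quu *ᵥ dustar δx = -(Qu + Qux *ᵥ δx) := by
    rw [hdustar]
    exact mulVec_neg_inv_mulVec_sub_inv_mul_mulVec hQuu_pd.det_pos.ne'.isUnit Qux Qu δx
  rw [(hLeast _ _).csInf_eq, (hLeast _ _).csInf_eq, add_lt_add_iff_right, hG₂, hG₂,
    quadraticFn₂_eq_quadraticFn, quadraticFn₂_eq_quadraticFn, add_lt_add_iff_right]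
  exact quadraticFn_lt_of_posDef hQuu_pd hdustar_crit hne

/-- **Theorem 1 of the paper (optimal control deviations).** After extremizing the next
state `x'` out of the one-step future stress, the result is the quadratic `Q`-function
(up to a constant `c`), and when `Q_uu` is positive definite the unique minimizing control
deviation is `δu* = -Q_uu⁻¹ Q_u - Q_uu⁻¹ Q_ux δx`. -/
theorem optimal_control_deviation
    (n p : ℕ) (hn : 0 < n) (hp : 0 < p) (σ : ℝ) (hσ : σ ≠ 0)
    (Ω : Matrix (Fin n) (Fin n) ℝ) (hΩ_symm : Ω.IsSymm) (hΩ_pd : Ω.PosDef)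
    (V : Matrix (Fin n) (Fin n) ℝ) (hV_symm : V.IsSymm) (hV_inv : IsUnit V.det)
    (hpd : (σ⁻¹ • Ω⁻¹ + V).PosDef)
    (v : Fin n → ℝ) (vbar : ℝ)
    (A : Matrix (Fin n) (Fin n) ℝ) (B : Matrix (Fin n) (Fin p) ℝ) (fbar : Fin n → ℝ)
    (lxx : Matrix (Fin n) (Fin n) ℝ) (hlxx : lxx.IsSymm)
    (lux : Matrix (Fin p) (Fin n) ℝ)
    (luu : Matrix (Fin p) (Fin p) ℝ) (hluu : luu.IsSymm)
    (lx : Fin n → ℝ) (lu : Fin p → ℝ)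
    (l : (Fin n → ℝ) → (Fin p → ℝ) → ℝ)
    (hl : ∀ δx δu, l δx δu = (1/2) * (δx ⬝ᵥ lxx *ᵥ δx) + δu ⬝ᵥ lux *ᵥ δx
        + (1/2) * (δu ⬝ᵥ luu *ᵥ δu) + lx ⬝ᵥ δx + lu ⬝ᵥ δu)
    (M : Matrix (Fin n) (Fin n) ℝ) (hM : M = (σ • Ω + V⁻¹)⁻¹)
    (N : Fin n → ℝ) (hN : N = v - σ • ((M * Ω) *ᵥ v))
    (Qx : Fin n → ℝ) (hQx : Qx = lx + Aᵀ *ᵥ (M *ᵥ fbar) + Aᵀ *ᵥ N)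
    (Qu : Fin p → ℝ) (hQu : Qu = lu + Bᵀ *ᵥ N + Bᵀ *ᵥ (M *ᵥ fbar))
    (Quu : Matrix (Fin p) (Fin p) ℝ) (hQuu : Quu = luu + Bᵀ * M * B)
    (Qux : Matrix (Fin p) (Fin n) ℝ) (hQux : Qux = lux + Bᵀ * M * A)
    (Qxx : Matrix (Fin n) (Fin n) ℝ) (hQxx : Qxx = lxx + Aᵀ * M * A)
    -- the full one-step future stress, as a function of `δx`, `δu` and the next state `x'`
    (S : (Fin n → ℝ) → (Fin p → ℝ) → (Fin n → ℝ) → ℝ)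
    (hS : ∀ δx δu x', S δx δu x' = l δx δu + (1/2) * (x' ⬝ᵥ V *ᵥ x') + v ⬝ᵥ x' + vbar
        + (2*σ)⁻¹ * ((x' - A *ᵥ δx - B *ᵥ δu - fbar) ⬝ᵥ Ω⁻¹ *ᵥ (x' - A *ᵥ δx - B *ᵥ δu - fbar)))
    -- the resulting quadratic `Q`-function in `(δx, δu)`
    (G : (Fin n → ℝ) → (Fin p → ℝ) → ℝ)
    (hG : ∀ δx δu, G δx δu = (1/2) * (δx ⬝ᵥ Qxx *ᵥ δx) + δu ⬝ᵥ Qux *ᵥ δx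
        + (1/2) * (δu ⬝ᵥ Quu *ᵥ δu) + Qx ⬝ᵥ δx + Qu ⬝ᵥ δu)
    (dustar : (Fin n → ℝ) → (Fin p → ℝ))
    (hdustar : ∀ δx, dustar δx = -(Quu⁻¹ *ᵥ Qu) - (Quu⁻¹ * Qux) *ᵥ δx) :
    (∃ c : ℝ, ∀ δx δu, IsLeast (Set.range (S δx δu)) (G δx δu + c)) ∧
    (Quu.PosDef → ∀ δx δu, δu ≠ dustar δx →
      sInf (Set.range (S δx (dustar δx))) < sInf (Set.range (S δx δu))) :=
  optimal_control_deviation_general n p σ hσ Ω hΩ_pd V hV_inv hpd v vbar A B fbar lxx lux luu lx lu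
    l hl M hM N hN Qx hQx Qu hQu Quu hQuu Qux hQux Qxx hQxx S hS G hG dustar hdustar
end

section
/- Let n be a positive integer, σ ≠ 0 a real number, Ω a symmetric positive definite n×n real matrix, V a symmetric invertible n×n real matrix such that σV + Ω⁻¹ is positive definite, v ∈ ℝ^n, v̄ ∈ ℝ, and z ∈ ℝ^n. Then ∫_{ℝ^n} exp(−σ·((1/2)·xᵀVx + vᵀx + v̄)) · (det(2πΩ))^(−1/2) · exp(−(1/2)·(x − z)ᵀΩ⁻¹(x − z)) dx = det(I + σΩV)^(−1/2) · exp(−σ·((1/2)·zᵀMz + Nᵀz + v̄ − (1/2)·vᵀ(V + σ⁻¹Ω⁻¹)⁻¹v)), where M = (σΩ + V⁻¹)⁻¹ and N = v − σMΩv; in particular σΩ + V⁻¹ and V + σ⁻¹Ω⁻¹ are invertible and det(I + σΩV) > 0. -/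
/-!
Completing the square, the integrand is a constant times `exp (-(1/2) xᵀ A x + bᵀ x)` with
`A = σ V + Ω⁻¹` and `b = Ω⁻¹ z - σ v`. Writing `A = Bᵀ B` and substituting `y = B x` turns this
into a product of one-dimensional Gaussian integrals, so it equals
`(2π)^(n/2) det A^(-1/2) exp (bᵀ A⁻¹ b / 2)`. Since `Ω A = I + σ Ω V`, the prefactor combines with
`det (2π Ω)^(-1/2)` to `det (I + σ Ω V)^(-1/2)`, and the exponent is rearranged with the help of
`σ Ω + V⁻¹ = V⁻¹ A Ω`.
-/

open MeasureTheory Matrix Real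

theorem add_inv_smul_eq_inv_smul_smul_add {K E : Type*} [Field K] [AddCommGroup E] [Module K E]
    {c : K} (hc : c ≠ 0) (x y : E) : x + c⁻¹ • y = c⁻¹ • (c • x + y) := by
  rw [smul_add, inv_smul_smul₀ hc]

section GaussianIntegrals

variable {ι : Type*} [Fintype ι]

theorem integral_exp_neg_half_dotProduct_self_add (c : ι → ℝ) :
    ∫ y : ι → ℝ, exp (-(1/2) * (y ⬝ᵥ y) + c ⬝ᵥ y)
      = (2 * π) ^ (Fintype.card ι / 2 : ℝ) * exp (c ⬝ᵥ c / 2) := by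
  have h := GaussianFourier.integral_cexp_neg_mul_sum_add (b := 1/2) (by norm_num)
    (fun i ↦ (c i : ℂ))
  apply Complex.ofReal_injective
  rw [← integral_complex_ofReal, Complex.ofReal_mul, Complex.ofReal_cpow (by positivity)]
  push_cast [dotProduct, sq] at h ⊢
  convert h using 3 <;> ring

variable [DecidableEq ι]

theorem integral_comp_mulVec {F : Type*} [NormedAddCommGroup F] [NormedSpace ℝ F]
    (B : Matrix ι ι ℝ) (hB : B.det ≠ 0) (f : (ι → ℝ) → F) :
    ∫ x, f (B *ᵥ x) = |B.det|⁻¹ • ∫ y, f y := by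
  have hdet : LinearMap.det (toLin' B) ≠ 0 := by rwa [LinearMap.det_toLin']
  let e :=
    (LinearMap.equivOfDetNeZero _ hdet).toContinuousLinearEquiv.toHomeomorph.toMeasurableEquiv
  calc ∫ x, f (B *ᵥ x) = ∫ y, f y ∂(volume.map e) := (integral_map_equiv e f).symm
    _ = |B.det|⁻¹ • ∫ y, f y := by
      rw [show ⇑e = toLin' B from rfl, Measure.map_linearMap_addHaar_pi_eq_smul_addHaar hdet,
        integral_smul_measure, LinearMap.det_toLin', abs_inv, ENNReal.toReal_ofReal (by positivity)]

open scoped MatrixOrder in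
theorem Matrix.PosDef.integral_exp_neg_quadratic_add_linear {A : Matrix ι ι ℝ}
    (hA : A.PosDef) (b : ι → ℝ) :
    ∫ x : ι → ℝ, exp (-(1/2) * (x ⬝ᵥ A *ᵥ x) + b ⬝ᵥ x)
      = (2 * π) ^ (Fintype.card ι / 2 : ℝ) * A.det ^ (-(1/2) : ℝ)
        * exp ((b ⬝ᵥ A⁻¹ *ᵥ b) / 2) := by
  have hA_det := hA.det_pos
  obtain ⟨B, rfl⟩ := CStarAlgebra.nonneg_iff_eq_star_mul_self.mp hA.posSemidef.nonneg
  rw [star_eq_conjTranspose, conjTranspose_eq_transpose_of_trivial] at hA_det ⊢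
  have hdet : (Bᵀ * B).det = B.det ^ 2 := by rw [det_mul, det_transpose, sq]
  have hB : IsUnit B.det := isUnit_iff_ne_zero.mpr fun h ↦ by simp [hdet, h] at hA_det
  have hquad (x : ι → ℝ) : x ⬝ᵥ (Bᵀ * B) *ᵥ x = (B *ᵥ x) ⬝ᵥ (B *ᵥ x) := by
    rw [← mulVec_mulVec, dotProduct_mulVec, vecMul_transpose]
  set c := b ᵥ* B⁻¹
  have hlin (x : ι → ℝ) : b ⬝ᵥ x = c ⬝ᵥ (B *ᵥ x) := by
    rw [← dotProduct_mulVec, mulVec_mulVec, nonsing_inv_mul _ hB, one_mulVec]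
  have hc : c ⬝ᵥ c = b ⬝ᵥ (Bᵀ * B)⁻¹ *ᵥ b := by
    rw [mul_inv_rev, ← mulVec_mulVec, dotProduct_mulVec, ← transpose_nonsing_inv,
      mulVec_transpose]
  have habs : |B.det|⁻¹ = (Bᵀ * B).det ^ (-(1/2) : ℝ) := by
    rw [hdet, ← sqrt_sq_eq_abs, sqrt_eq_rpow, ← rpow_neg (sq_nonneg _)]
  calc ∫ x, exp (-(1/2) * (x ⬝ᵥ (Bᵀ * B) *ᵥ x) + b ⬝ᵥ x)
      = ∫ x, exp (-(1/2) * ((B *ᵥ x) ⬝ᵥ (B *ᵥ x)) + c ⬝ᵥ (B *ᵥ x)) := by simp only [hquad, hlin]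
    _ = |B.det|⁻¹ * ((2 * π) ^ (Fintype.card ι / 2 : ℝ) * exp (c ⬝ᵥ c / 2)) := by
      rw [integral_comp_mulVec B hB.ne_zero (fun y ↦ exp (-(1/2) * (y ⬝ᵥ y) + c ⬝ᵥ y)),
        integral_exp_neg_half_dotProduct_self_add, smul_eq_mul]
    _ = _ := by rw [habs, hc]; ring

noncomputable def multivariateGaussianPDFReal (z : ι → ℝ) (Ω : Matrix ι ι ℝ) (x : ι → ℝ) : ℝ :=
  ((2 * π) • Ω).det ^ (-(1/2) : ℝ) * exp (-(1/2) * ((x - z) ⬝ᵥ Ω⁻¹ *ᵥ (x - z)))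

theorem one_add_mul_eq_mul_add_inv {Ω : Matrix ι ι ℝ} (hΩ : IsUnit Ω.det) (W : Matrix ι ι ℝ) :
    1 + Ω * W = Ω * (W + Ω⁻¹) := by
  rw [Matrix.mul_add, mul_nonsing_inv _ hΩ, add_comm]

theorem integral_exp_quadratic_mul_multivariateGaussianPDFReal {Ω W : Matrix ι ι ℝ}
    (hΩ : Ω.PosDef) (hA : (W + Ω⁻¹).PosDef) (w z : ι → ℝ) (c : ℝ) :
    ∫ x, exp (-(1/2) * (x ⬝ᵥ W *ᵥ x) + w ⬝ᵥ x + c) * multivariateGaussianPDFReal z Ω x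
      = (1 + Ω * W).det ^ (-(1/2) : ℝ) * exp (c + ((Ω⁻¹ *ᵥ z + w) ⬝ᵥ (W + Ω⁻¹)⁻¹ *ᵥ (Ω⁻¹ *ᵥ z + w)
          - z ⬝ᵥ Ω⁻¹ *ᵥ z) / 2) := by
  have hΩ_unit : IsUnit Ω.det := isUnit_iff_ne_zero.mpr hΩ.det_pos.ne'
  have hΩ_symm : Ω⁻¹ᵀ = Ω⁻¹ := (isHermitian_iff_isSymm.mp hΩ.inv.isHermitian).eq
  have hcross (x : ι → ℝ) : z ⬝ᵥ Ω⁻¹ *ᵥ x = (Ω⁻¹ *ᵥ z) ⬝ᵥ x := by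
    rw [dotProduct_mulVec, ← mulVec_transpose, hΩ_symm]
  set C := ((2 * π) • Ω).det ^ (-(1/2) : ℝ) * exp (c - (z ⬝ᵥ Ω⁻¹ *ᵥ z) / 2)
  have hintegrand (x : ι → ℝ) :
      exp (-(1/2) * (x ⬝ᵥ W *ᵥ x) + w ⬝ᵥ x + c) * multivariateGaussianPDFReal z Ω x
        = C * exp (-(1/2) * (x ⬝ᵥ (W + Ω⁻¹) *ᵥ x) + (Ω⁻¹ *ᵥ z + w) ⬝ᵥ x) := by
    have hsq : (x - z) ⬝ᵥ Ω⁻¹ *ᵥ (x - z)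
        = x ⬝ᵥ Ω⁻¹ *ᵥ x - 2 * ((Ω⁻¹ *ᵥ z) ⬝ᵥ x) + z ⬝ᵥ Ω⁻¹ *ᵥ z := by
      rw [mulVec_sub, dotProduct_sub, sub_dotProduct, sub_dotProduct, hcross,
        dotProduct_comm x (Ω⁻¹ *ᵥ z)]
      ring
    rw [multivariateGaussianPDFReal, hsq, add_mulVec, dotProduct_add, add_dotProduct]
    rw [mul_left_comm, ← exp_add, mul_assoc, ← exp_add]
    congr 2
    ring
  have hprefactor : ((2 * π) • Ω).det ^ (-(1/2) : ℝ) * (2 * π) ^ (Fintype.card ι / 2 : ℝ)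
      * (W + Ω⁻¹).det ^ (-(1/2) : ℝ) = (1 + Ω * W).det ^ (-(1/2) : ℝ) := by
    have h2π : (0 : ℝ) < 2 * π := by positivity
    have hpow : ((2 * π) ^ Fintype.card ι) ^ (-(1/2) : ℝ) * (2 * π) ^ (Fintype.card ι / 2 : ℝ)
        = 1 := by
      rw [← rpow_natCast, ← rpow_mul h2π.le, ← rpow_add h2π, mul_neg, mul_one_div,
        neg_add_cancel, rpow_zero]
    rw [det_smul, one_add_mul_eq_mul_add_inv hΩ_unit, det_mul,
      mul_rpow (by positivity) hΩ.det_pos.le, mul_rpow hΩ.det_pos.le hA.det_pos.le]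
    linear_combination (Ω.det ^ (-(1/2) : ℝ) * (W + Ω⁻¹).det ^ (-(1/2) : ℝ)) * hpow
  simp_rw [hintegrand]
  rw [integral_const_mul, hA.integral_exp_neg_quadratic_add_linear, ← hprefactor]
  simp only [C, sub_div, exp_add, exp_sub]
  ring

end GaussianIntegrals

section RiskSensitive

variable {ι : Type*} [Fintype ι] [DecidableEq ι] {σ : ℝ} {Ω V : Matrix ι ι ℝ}

theorem smul_add_inv_eq_inv_mul_mul (hΩ : IsUnit Ω.det) (hV : IsUnit V.det) :
    σ • Ω + V⁻¹ = V⁻¹ * (σ • V + Ω⁻¹) * Ω := by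
  rw [Matrix.mul_add, Matrix.add_mul, Matrix.mul_smul, Matrix.smul_mul, nonsing_inv_mul _ hV,
    Matrix.one_mul, Matrix.mul_assoc, nonsing_inv_mul _ hΩ, Matrix.mul_one]

theorem inv_smul_add_inv (hΩ : IsUnit Ω.det) (hV : IsUnit V.det) :
    (σ • Ω + V⁻¹)⁻¹ = Ω⁻¹ * (σ • V + Ω⁻¹)⁻¹ * V := by
  rw [smul_add_inv_eq_inv_mul_mul hΩ hV, Matrix.mul_inv_rev, Matrix.mul_inv_rev,
    nonsing_inv_nonsing_inv _ hV, Matrix.mul_assoc]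

theorem inv_mul_inv_smul_add_inv_mul_inv (hΩ : IsUnit Ω.det) (hV : IsUnit V.det)
    (hA : IsUnit (σ • V + Ω⁻¹).det) :
    Ω⁻¹ * (σ • V + Ω⁻¹)⁻¹ * Ω⁻¹ = Ω⁻¹ - σ • (σ • Ω + V⁻¹)⁻¹ := by
  calc Ω⁻¹ * (σ • V + Ω⁻¹)⁻¹ * Ω⁻¹ = Ω⁻¹ * (σ • V + Ω⁻¹)⁻¹ * ((σ • V + Ω⁻¹) - σ • V) := by
        rw [add_sub_cancel_left]
    _ = Ω⁻¹ - σ • (σ • Ω + V⁻¹)⁻¹ := by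
        rw [inv_smul_add_inv hΩ hV, Matrix.mul_sub, Matrix.mul_assoc _ _ (σ • V + Ω⁻¹),
          nonsing_inv_mul _ hA, Matrix.mul_one, Matrix.mul_smul]

theorem one_sub_smul_inv_smul_add_inv_mul (hΩ : IsUnit Ω.det) (hV : IsUnit V.det)
    (hA : IsUnit (σ • V + Ω⁻¹).det) :
    1 - σ • ((σ • Ω + V⁻¹)⁻¹ * Ω) = Ω⁻¹ * (σ • V + Ω⁻¹)⁻¹ := by
  calc 1 - σ • ((σ • Ω + V⁻¹)⁻¹ * Ω)
      = Ω⁻¹ * (σ • V + Ω⁻¹)⁻¹ * ((σ • V + Ω⁻¹) * Ω)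
          - Ω⁻¹ * (σ • V + Ω⁻¹)⁻¹ * (σ • (V * Ω)) := by
        rw [inv_smul_add_inv hΩ hV, ← Matrix.mul_assoc _ (σ • V + Ω⁻¹),
          Matrix.mul_assoc Ω⁻¹ _ (σ • V + Ω⁻¹), nonsing_inv_mul _ hA, Matrix.mul_one,
          nonsing_inv_mul _ hΩ, Matrix.mul_smul, Matrix.mul_assoc, Matrix.mul_assoc]
    _ = Ω⁻¹ * (σ • V + Ω⁻¹)⁻¹ := by
        rw [← Matrix.mul_sub, Matrix.add_mul, Matrix.smul_mul, add_sub_cancel_left,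
          nonsing_inv_mul _ hΩ, Matrix.mul_one]

theorem inv_add_inv_smul_inv (hσ : σ ≠ 0) (hA : IsUnit (σ • V + Ω⁻¹).det) :
    (V + σ⁻¹ • Ω⁻¹)⁻¹ = σ • (σ • V + Ω⁻¹)⁻¹ := by
  rw [add_inv_smul_eq_inv_smul_smul_add hσ]
  refine inv_eq_right_inv ?_
  rw [Matrix.smul_mul, Matrix.mul_smul, smul_smul, inv_mul_cancel₀ hσ, one_smul,
    mul_nonsing_inv _ hA]

theorem riskSensitive_exponent_eq (hσ : σ ≠ 0) (hΩ : IsUnit Ω.det) (hV : IsUnit V.det)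
    (hA : IsUnit (σ • V + Ω⁻¹).det) (hΩ_symm : Ω.IsSymm) (hA_symm : (σ • V + Ω⁻¹).IsSymm)
    (v z : ι → ℝ) :
    (Ω⁻¹ *ᵥ z - σ • v) ⬝ᵥ (σ • V + Ω⁻¹)⁻¹ *ᵥ (Ω⁻¹ *ᵥ z - σ • v) - z ⬝ᵥ Ω⁻¹ *ᵥ z
      = -σ * (z ⬝ᵥ (σ • Ω + V⁻¹)⁻¹ *ᵥ z + 2 * ((v - σ • (((σ • Ω + V⁻¹)⁻¹ * Ω) *ᵥ v)) ⬝ᵥ z)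
        - v ⬝ᵥ (V + σ⁻¹ • Ω⁻¹)⁻¹ *ᵥ v) := by
  set A := σ • V + Ω⁻¹
  set M := (σ • Ω + V⁻¹)⁻¹
  set N := v - σ • ((M * Ω) *ᵥ v) with hN
  have hΩinv (x y : ι → ℝ) : (Ω⁻¹ *ᵥ x) ⬝ᵥ y = x ⬝ᵥ Ω⁻¹ *ᵥ y := by
    rw [dotProduct_mulVec, ← mulVec_transpose, hΩ_symm.inv.eq]
  have hAinv (x y : ι → ℝ) : x ⬝ᵥ A⁻¹ *ᵥ y = y ⬝ᵥ A⁻¹ *ᵥ x := by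
    rw [dotProduct_mulVec, ← mulVec_transpose, hA_symm.inv.eq, dotProduct_comm]
  have hzz : (Ω⁻¹ *ᵥ z) ⬝ᵥ A⁻¹ *ᵥ (Ω⁻¹ *ᵥ z) = z ⬝ᵥ Ω⁻¹ *ᵥ z - σ * (z ⬝ᵥ M *ᵥ z) := by
    rw [hΩinv, mulVec_mulVec, mulVec_mulVec,
      inv_mul_inv_smul_add_inv_mul_inv hΩ hV hA, sub_mulVec, dotProduct_sub, smul_mulVec,
      dotProduct_smul, smul_eq_mul]
  have hzv : (Ω⁻¹ *ᵥ z) ⬝ᵥ A⁻¹ *ᵥ v = N ⬝ᵥ z := by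
    rw [hN, hΩinv, mulVec_mulVec, ← one_sub_smul_inv_smul_add_inv_mul hΩ hV hA, sub_mulVec,
      one_mulVec, smul_mulVec, dotProduct_comm]
  have hvv : v ⬝ᵥ (V + σ⁻¹ • Ω⁻¹)⁻¹ *ᵥ v = σ * (v ⬝ᵥ A⁻¹ *ᵥ v) := by
    rw [inv_add_inv_smul_inv hσ hA, smul_mulVec, dotProduct_smul, smul_eq_mul]
  simp only [mulVec_sub, mulVec_smul, dotProduct_sub, sub_dotProduct, dotProduct_smul,
    smul_dotProduct, smul_eq_mul]
  rw [hAinv v, hzz, hzv, hvv]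
  ring

end RiskSensitive

theorem gaussian_exp_quadratic_expectation_general
    (n : ℕ) (σ : ℝ) (hσ : σ ≠ 0)
    (Ω : Matrix (Fin n) (Fin n) ℝ) (hΩ_pd : Ω.PosDef)
    (V : Matrix (Fin n) (Fin n) ℝ) (hV_inv : IsUnit V.det)
    (hpd : (σ • V + Ω⁻¹).PosDef)
    (v : Fin n → ℝ) (vbar : ℝ) (z : Fin n → ℝ)
    (M : Matrix (Fin n) (Fin n) ℝ) (hM : M = (σ • Ω + V⁻¹)⁻¹)
    (N : Fin n → ℝ) (hN : N = v - σ • ((M * Ω) *ᵥ v)) :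
    IsUnit (σ • Ω + V⁻¹).det ∧
    IsUnit (V + σ⁻¹ • Ω⁻¹).det ∧
    0 < (1 + σ • (Ω * V)).det ∧
    (∫ x : Fin n → ℝ,
        Real.exp (-σ * ((1/2) * (x ⬝ᵥ V *ᵥ x) + v ⬝ᵥ x + vbar))
          * (((2 * Real.pi) • Ω).det) ^ (-(1/2) : ℝ)
          * Real.exp (-(1/2) * ((x - z) ⬝ᵥ Ω⁻¹ *ᵥ (x - z))))
      = ((1 + σ • (Ω * V)).det) ^ (-(1/2) : ℝ)
        * Real.exp (-σ * ((1/2) * (z ⬝ᵥ M *ᵥ z) + N ⬝ᵥ z + vbar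
            - (1/2) * (v ⬝ᵥ (V + σ⁻¹ • Ω⁻¹)⁻¹ *ᵥ v))) := by
  have hΩ : IsUnit Ω.det := isUnit_iff_ne_zero.mpr hΩ_pd.det_pos.ne'
  have hA : IsUnit (σ • V + Ω⁻¹).det := isUnit_iff_ne_zero.mpr hpd.det_pos.ne'
  refine ⟨?_, ?_, ?_, ?_⟩
  · rw [smul_add_inv_eq_inv_mul_mul hΩ hV_inv, det_mul, det_mul]
    exact ((isUnit_nonsing_inv_det _ hV_inv).mul hA).mul hΩ
  · rw [add_inv_smul_eq_inv_smul_smul_add hσ, det_smul]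
    exact ((isUnit_iff_ne_zero.mpr (inv_ne_zero hσ)).pow _).mul hA
  · rw [← Matrix.mul_smul, one_add_mul_eq_mul_add_inv hΩ, det_mul]
    exact mul_pos hΩ_pd.det_pos hpd.det_pos
  calc _ = ∫ x, exp (-(1/2) * (x ⬝ᵥ (σ • V) *ᵥ x) + (-σ • v) ⬝ᵥ x + -(σ * vbar))
          * multivariateGaussianPDFReal z Ω x := by
        congr with x
        rw [mul_assoc, multivariateGaussianPDFReal]
        congr 2
        simp only [smul_mulVec, dotProduct_smul, smul_dotProduct, smul_eq_mul]
        ring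
    _ = _ := integral_exp_quadratic_mul_multivariateGaussianPDFReal hΩ_pd hpd _ z _
    _ = _ := by
        subst hM hN
        rw [← Matrix.mul_smul, neg_smul, ← sub_eq_add_neg]
        congr 2
        linear_combination (1/2) * riskSensitive_exponent_eq hσ hΩ hV_inv hA
          (isHermitian_iff_isSymm.mp hΩ_pd.isHermitian)
          (isHermitian_iff_isSymm.mp hpd.isHermitian) v z

/-- **One-step Gaussian-expectation identity** underlying the risk-sensitive cost recursion
(Theorem 3 of the paper): the expectation of `exp (-σ q(x))` of a quadratic `q` under
`x ~ N(z, Ω)` is again an exponential of a quadratic in `z`, with determinant prefactor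
`det (I + σ Ω V) ^ (-1/2)`. -/
theorem gaussian_exp_quadratic_expectation
    (n : ℕ) (hn : 0 < n) (σ : ℝ) (hσ : σ ≠ 0)
    (Ω : Matrix (Fin n) (Fin n) ℝ) (hΩ_symm : Ω.IsSymm) (hΩ_pd : Ω.PosDef)
    (V : Matrix (Fin n) (Fin n) ℝ) (hV_symm : V.IsSymm) (hV_inv : IsUnit V.det)
    (hpd : (σ • V + Ω⁻¹).PosDef)
    (v : Fin n → ℝ) (vbar : ℝ) (z : Fin n → ℝ)
    (M : Matrix (Fin n) (Fin n) ℝ) (hM : M = (σ • Ω + V⁻¹)⁻¹)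
    (N : Fin n → ℝ) (hN : N = v - σ • ((M * Ω) *ᵥ v)) :
    IsUnit (σ • Ω + V⁻¹).det ∧
    IsUnit (V + σ⁻¹ • Ω⁻¹).det ∧
    0 < (1 + σ • (Ω * V)).det ∧
    (∫ x : Fin n → ℝ,
        Real.exp (-σ * ((1/2) * (x ⬝ᵥ V *ᵥ x) + v ⬝ᵥ x + vbar))
          * (((2 * Real.pi) • Ω).det) ^ (-(1/2) : ℝ)
          * Real.exp (-(1/2) * ((x - z) ⬝ᵥ Ω⁻¹ *ᵥ (x - z))))
      = ((1 + σ • (Ω * V)).det) ^ (-(1/2) : ℝ)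
        * Real.exp (-σ * ((1/2) * (z ⬝ᵥ M *ᵥ z) + N ⬝ᵥ z + vbar
            - (1/2) * (v ⬝ᵥ (V + σ⁻¹ • Ω⁻¹)⁻¹ *ᵥ v))) :=
  gaussian_exp_quadratic_expectation_general n σ hσ Ω hΩ_pd V hV_inv hpd v vbar z M hM N hN
end

section
/- Let n, p, q be positive integers and σ a real number. Let P be a symmetric positive definite n×n real matrix, Ω a symmetric positive definite n×n matrix, Γ a symmetric positive definite q×q matrix, A an n×n matrix, B an n×p matrix, C a q×n matrix, f̄ ∈ ℝ^n, l_xx a symmetric n×n matrix, l_xu an n×p matrix, l_x ∈ ℝ^n, x̂ ∈ ℝ^n, δu ∈ ℝ^p, δy ∈ ℝ^q, and assume H⁻¹ := P⁻¹ + CᵀΓ⁻¹C + σ·l_xx is positive definite, with H its inverse. Define G = A·H·Cᵀ·Γ⁻¹, P' = Ω + A·H·Aᵀ, and x̂' = A·x̂ + B·δu + f̄ + G·(δy − C·x̂) − σ·A·H·(l_xx·x̂ + l_xu·δu + l_x). Then there exists a constant c ∈ ℝ (not depending on x') such that for every x' ∈ ℝ^n, the minimum over ξ ∈ ℝ^n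 of [σ·((1/2)·ξᵀ l_xx ξ + ξᵀ l_xu δu + l_xᵀξ) + (1/2)·(x' − Aξ − Bδu − f̄)ᵀΩ⁻¹(x' − Aξ − Bδu − f̄) + (1/2)·(δy − Cξ)ᵀΓ⁻¹(δy − Cξ) + (1/2)·(ξ − x̂)ᵀP⁻¹(ξ − x̂)] equals (1/2)·(x' − x̂')ᵀ(P')⁻¹(x' − x̂') + c; moreover P' is symmetric positive definite. -/
/-!
For fixed `x'` the integrand is a quadratic in `ξ` with Hessian `M = H⁻¹ + Aᵀ Ω⁻¹ A`, which is
positive definite, so its minimum is its constant term minus `½ bᵀ M⁻¹ b`, where the linear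
coefficient `b = Aᵀ Ω⁻¹ (x' - B δu - f̄) + d` is affine in `x'`. Eliminating `ξ` this way leaves
a quadratic in `x'` whose Hessian is the Schur complement `Ω⁻¹ - Ω⁻¹ A M⁻¹ Aᵀ Ω⁻¹`, which is
`P'⁻¹` by the Woodbury identity, and whose centre is `B δu + f̄ + A H d` by the push-through
identity `Ω⁻¹ A M⁻¹ = P'⁻¹ A H`. Finally `H P⁻¹ = 1 - H Cᵀ Γ⁻¹ C - σ H l_xx` rewrites the
information-form mean `A H d` into the gain form defining `x̂'`.
-/

open Matrix

namespace Matrix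

variable {m n R : Type*} [Fintype m] [Fintype n]

section CommRing

variable [CommRing R]

theorem IsSymm.dotProduct_mulVec_comm_s10 {Q : Matrix n n R} (hQ : Q.IsSymm) (x y : n → R) :
    x ⬝ᵥ Q *ᵥ y = y ⬝ᵥ Q *ᵥ x := by
  simpa only [hQ.eq] using dotProduct_transpose_mulVec Q x y

theorem mulVec_dotProduct_eq_transpose_mulVec (A : Matrix n m R) (x : m → R) (z : n → R) :
    (A *ᵥ x) ⬝ᵥ z = (Aᵀ *ᵥ z) ⬝ᵥ x := by
  rw [dotProduct_comm (Aᵀ *ᵥ z), dotProduct_transpose_mulVec, dotProduct_comm]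

theorem mulVec_dotProduct_mulVec_mulVec (A : Matrix n m R) (Q : Matrix n n R) (x y : m → R) :
    (A *ᵥ x) ⬝ᵥ Q *ᵥ (A *ᵥ y) = x ⬝ᵥ (Aᵀ * Q * A) *ᵥ y := by
  rw [mulVec_dotProduct_eq_transpose_mulVec, dotProduct_comm, mulVec_mulVec, mulVec_mulVec]

theorem IsSymm.add_dotProduct_mulVec_add {Q : Matrix n n R} (hQ : Q.IsSymm) (x y : n → R) :
    (x + y) ⬝ᵥ Q *ᵥ (x + y) = x ⬝ᵥ Q *ᵥ x + 2 * ((Q *ᵥ y) ⬝ᵥ x) + y ⬝ᵥ Q *ᵥ y := by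
  rw [mulVec_add, add_dotProduct, dotProduct_add, dotProduct_add, hQ.dotProduct_mulVec_comm_s10 y x,
    dotProduct_comm (Q *ᵥ y)]
  ring

theorem IsSymm.sub_dotProduct_mulVec_sub {Q : Matrix n n R} (hQ : Q.IsSymm) (x y : n → R) :
    (x - y) ⬝ᵥ Q *ᵥ (x - y) = x ⬝ᵥ Q *ᵥ x - 2 * ((Q *ᵥ y) ⬝ᵥ x) + y ⬝ᵥ Q *ᵥ y := by
  rw [sub_eq_add_neg, hQ.add_dotProduct_mulVec_add, mulVec_neg, neg_dotProduct, neg_dotProduct,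
    dotProduct_neg]
  ring

theorem IsSymm.sub_mulVec_dotProduct_mulVec_sub_mulVec {W : Matrix n n R} (hW : W.IsSymm)
    (A : Matrix n m R) (v : n → R) (ξ : m → R) :
    (v - A *ᵥ ξ) ⬝ᵥ W *ᵥ (v - A *ᵥ ξ)
      = ξ ⬝ᵥ (Aᵀ * W * A) *ᵥ ξ - 2 * ((Aᵀ *ᵥ (W *ᵥ v)) ⬝ᵥ ξ) + v ⬝ᵥ W *ᵥ v := by
  rw [hW.sub_dotProduct_mulVec_sub, mulVec_dotProduct_mulVec_mulVec,
    dotProduct_comm (W *ᵥ (A *ᵥ ξ)) v, hW.dotProduct_mulVec_comm_s10 v (A *ᵥ ξ),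
    mulVec_dotProduct_eq_transpose_mulVec A ξ (W *ᵥ v)]
  ring

theorem IsSymm.dotProduct_mulVec_sub_schur {W : Matrix n n R} {N : Matrix m m R}
    {S : Matrix n n R} (hW : W.IsSymm) (hN : N.IsSymm) (A L : Matrix n m R)
    (hS : W - W * A * N * Aᵀ * W = S) (hL : W * A * N = S * L) (d : m → R) (u : n → R) :
    u ⬝ᵥ W *ᵥ u - (Aᵀ *ᵥ (W *ᵥ u) + d) ⬝ᵥ N *ᵥ (Aᵀ *ᵥ (W *ᵥ u) + d)
      = (u - L *ᵥ d) ⬝ᵥ S *ᵥ (u - L *ᵥ d) - ((L *ᵥ d) ⬝ᵥ S *ᵥ (L *ᵥ d) + d ⬝ᵥ N *ᵥ d) := by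
  have hS_symm : S.IsSymm := by
    rw [← hS]
    refine hW.sub ?_
    simp only [IsSymm, transpose_mul, transpose_transpose, hW.eq, hN.eq, Matrix.mul_assoc]
  have hquad : u ⬝ᵥ W *ᵥ u - (Aᵀ *ᵥ (W *ᵥ u)) ⬝ᵥ N *ᵥ (Aᵀ *ᵥ (W *ᵥ u)) = u ⬝ᵥ S *ᵥ u := by
    rw [mulVec_mulVec, mulVec_dotProduct_mulVec_mulVec, transpose_mul, transpose_transpose, hW.eq,
      ← hS, sub_mulVec, dotProduct_sub]
    simp only [Matrix.mul_assoc]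
  have hcross : (N *ᵥ d) ⬝ᵥ (Aᵀ *ᵥ (W *ᵥ u)) = (S *ᵥ (L *ᵥ d)) ⬝ᵥ u := by
    rw [dotProduct_comm, mulVec_dotProduct_eq_transpose_mulVec, transpose_transpose,
      dotProduct_comm, mulVec_dotProduct_eq_transpose_mulVec, hW.eq, mulVec_mulVec, mulVec_mulVec,
      mulVec_mulVec, hL]
  rw [hN.add_dotProduct_mulVec_add, hcross, hS_symm.sub_dotProduct_mulVec_sub, ← hquad]
  ring

theorem mul_mulVec_information_eq_gain [DecidableEq m] {k o p : Type*} [Fintype o] [Fintype p]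
    (σ : R) (A : Matrix k m R) {H Q lxx : Matrix m m R} {C : Matrix o m R} {V : Matrix o o R}
    (hHK : H * (Q + Cᵀ * V * C + σ • lxx) = 1) (lxu : Matrix m p R) (lx xhat : m → R)
    (δu : p → R) (y : o → R) :
    (A * H) *ᵥ (Cᵀ *ᵥ (V *ᵥ y) + Q *ᵥ xhat - σ • (lxu *ᵥ δu + lx))
      = A *ᵥ xhat + (A * H * Cᵀ * V) *ᵥ (y - C *ᵥ xhat)
        - σ • ((A * H) *ᵥ (lxx *ᵥ xhat + lxu *ᵥ δu + lx)) := by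
  have hAHQ : A * H * Q = A - A * H * (Cᵀ * V * C) - σ • (A * H * lxx) :=
    calc A * H * Q = A * H * (Q + Cᵀ * V * C + σ • lxx) - A * H * (Cᵀ * V * C)
          - σ • (A * H * lxx) := by
          simp only [Matrix.mul_add, Matrix.mul_smul]
          abel
      _ = A - A * H * (Cᵀ * V * C) - σ • (A * H * lxx) := by
          rw [Matrix.mul_assoc A H, hHK, Matrix.mul_one]
  simp only [mulVec_add, mulVec_sub, mulVec_smul, mulVec_mulVec]
  rw [hAHQ]
  simp only [sub_mulVec, smul_mulVec, smul_add, Matrix.mul_assoc]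
  abel

end CommRing

section Field

variable {K : Type*} [Field K] [DecidableEq n] [DecidableEq m]

theorem add_mul_mul_inv_mul_mul_eq (A : Matrix n n K) (U : Matrix n m K) (C : Matrix m m K)
    (V : Matrix m n K) (hA : IsUnit A) (hC : IsUnit C) (hAC : IsUnit (C⁻¹ + V * A⁻¹ * U)) :
    (A + U * C * V)⁻¹ * (U * C) = A⁻¹ * U * (C⁻¹ + V * A⁻¹ * U)⁻¹ := by
  rw [add_mul_mul_inv_eq_sub A U C V hA hC hAC]
  set N := C⁻¹ + V * A⁻¹ * U
  have hVAU : V * A⁻¹ * U = N - C⁻¹ := by simp only [N, add_sub_cancel_left]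
  have hNN : N⁻¹ * N = 1 := nonsing_inv_mul N ((isUnit_iff_isUnit_det N).mp hAC)
  have hCC : C⁻¹ * C = 1 := nonsing_inv_mul C ((isUnit_iff_isUnit_det C).mp hC)
  have hcorr : A⁻¹ * U * N⁻¹ * V * A⁻¹ * (U * C) = A⁻¹ * U * C - A⁻¹ * U * N⁻¹ :=
    calc A⁻¹ * U * N⁻¹ * V * A⁻¹ * (U * C) = A⁻¹ * U * (N⁻¹ * (V * A⁻¹ * U)) * C := by
          simp only [Matrix.mul_assoc]
      _ = A⁻¹ * U * C - A⁻¹ * U * N⁻¹ * (C⁻¹ * C) := by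
          rw [hVAU, Matrix.mul_sub, hNN, Matrix.mul_sub, Matrix.mul_one, Matrix.sub_mul]
          simp only [Matrix.mul_assoc]
      _ = A⁻¹ * U * C - A⁻¹ * U * N⁻¹ := by rw [hCC, Matrix.mul_one]
  rw [Matrix.sub_mul, hcorr, Matrix.mul_assoc A⁻¹ U C, sub_sub_cancel]

end Field

theorem PosDef.isLeast_range_quadratic [DecidableEq n] {M : Matrix n n ℝ} (hM : M.PosDef)
    (b : n → ℝ) (k : ℝ) :
    IsLeast (Set.range fun ξ => (1/2) * (ξ ⬝ᵥ M *ᵥ ξ) - b ⬝ᵥ ξ + k)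
      (k - (1/2) * (b ⬝ᵥ M⁻¹ *ᵥ b)) := by
  have hM_symm : M.IsSymm := isHermitian_iff_isSymm.mp hM.isHermitian
  have hMM : M *ᵥ (M⁻¹ *ᵥ b) = b := by
    rw [mulVec_mulVec, mul_nonsing_inv M ((isUnit_iff_isUnit_det M).mp hM.isUnit), one_mulVec]
  have hsq : ∀ ξ, (1/2) * (ξ ⬝ᵥ M *ᵥ ξ) - b ⬝ᵥ ξ + k
      = (1/2) * ((ξ - M⁻¹ *ᵥ b) ⬝ᵥ M *ᵥ (ξ - M⁻¹ *ᵥ b)) + (k - (1/2) * (b ⬝ᵥ M⁻¹ *ᵥ b)) := by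
    intro ξ
    rw [hM_symm.sub_dotProduct_mulVec_sub, hMM, dotProduct_comm (M⁻¹ *ᵥ b)]
    ring
  refine ⟨⟨M⁻¹ *ᵥ b, by simp only [hsq, sub_self, zero_dotProduct, mul_zero, zero_add]⟩, ?_⟩
  rintro _ ⟨ξ, rfl⟩
  have hnonneg := hM.posSemidef.dotProduct_mulVec_nonneg (ξ - M⁻¹ *ᵥ b)
  simp only [star_trivial] at hnonneg
  dsimp only
  rw [hsq]
  linarith

end Matrix

theorem stress_integrand_eq_quadratic {m n o p : Type*} [Fintype m] [Fintype n] [Fintype o]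
    [Fintype p] (σ : ℝ) (lxx : Matrix m m ℝ) (lxu : Matrix m p ℝ) (lx : m → ℝ) (δu : p → ℝ)
    {W : Matrix n n ℝ} (hW : W.IsSymm) (A : Matrix n m ℝ) (v : n → ℝ)
    {V : Matrix o o ℝ} (hV : V.IsSymm) (C : Matrix o m ℝ) (y : o → ℝ)
    {Q : Matrix m m ℝ} (hQ : Q.IsSymm) (xhat ξ : m → ℝ) :
    σ * ((1/2) * (ξ ⬝ᵥ lxx *ᵥ ξ) + ξ ⬝ᵥ lxu *ᵥ δu + lx ⬝ᵥ ξ)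
      + (1/2) * ((v - A *ᵥ ξ) ⬝ᵥ W *ᵥ (v - A *ᵥ ξ))
      + (1/2) * ((y - C *ᵥ ξ) ⬝ᵥ V *ᵥ (y - C *ᵥ ξ))
      + (1/2) * ((ξ - xhat) ⬝ᵥ Q *ᵥ (ξ - xhat))
    = (1/2) * (ξ ⬝ᵥ (Q + Cᵀ * V * C + σ • lxx + Aᵀ * W * A) *ᵥ ξ)
      - (Aᵀ *ᵥ (W *ᵥ v) + (Cᵀ *ᵥ (V *ᵥ y) + Q *ᵥ xhat - σ • (lxu *ᵥ δu + lx))) ⬝ᵥ ξ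
      + ((1/2) * (v ⬝ᵥ W *ᵥ v) + (1/2) * (y ⬝ᵥ V *ᵥ y) + (1/2) * (xhat ⬝ᵥ Q *ᵥ xhat)) := by
  rw [hW.sub_mulVec_dotProduct_mulVec_sub_mulVec, hV.sub_mulVec_dotProduct_mulVec_sub_mulVec,
    hQ.sub_dotProduct_mulVec_sub]
  simp only [add_mulVec, smul_mulVec, dotProduct_add, dotProduct_smul, add_dotProduct,
    sub_dotProduct, smul_dotProduct, smul_eq_mul, dotProduct_comm ξ (lxu *ᵥ δu)]
  ring

theorem past_stress_forward_recursion_general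
    (n p q : ℕ) (σ : ℝ)
    (P : Matrix (Fin n) (Fin n) ℝ) (hP_symm : P.IsSymm)
    (Ω : Matrix (Fin n) (Fin n) ℝ) (hΩ_pd : Ω.PosDef)
    (Γ : Matrix (Fin q) (Fin q) ℝ) (hΓ_symm : Γ.IsSymm)
    (A : Matrix (Fin n) (Fin n) ℝ) (B : Matrix (Fin n) (Fin p) ℝ)
    (C : Matrix (Fin q) (Fin n) ℝ) (fbar : Fin n → ℝ)
    (lxx : Matrix (Fin n) (Fin n) ℝ)
    (lxu : Matrix (Fin n) (Fin p) ℝ) (lx : Fin n → ℝ)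
    (xhat : Fin n → ℝ) (δu : Fin p → ℝ) (δy : Fin q → ℝ)
    (hpd : (P⁻¹ + Cᵀ * Γ⁻¹ * C + σ • lxx).PosDef)
    (H : Matrix (Fin n) (Fin n) ℝ) (hH : H = (P⁻¹ + Cᵀ * Γ⁻¹ * C + σ • lxx)⁻¹)
    (G : Matrix (Fin n) (Fin q) ℝ) (hG : G = A * H * Cᵀ * Γ⁻¹)
    (P' : Matrix (Fin n) (Fin n) ℝ) (hP' : P' = Ω + A * H * Aᵀ)
    (xhat' : Fin n → ℝ)
    (hxhat' : xhat' = A *ᵥ xhat + B *ᵥ δu + fbar + G *ᵥ (δy - C *ᵥ xhat)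
        - σ • ((A * H) *ᵥ (lxx *ᵥ xhat + lxu *ᵥ δu + lx))) :
    (∃ c : ℝ, ∀ x' : Fin n → ℝ,
      IsLeast (Set.range (fun ξ : Fin n → ℝ =>
          σ * ((1/2) * (ξ ⬝ᵥ lxx *ᵥ ξ) + ξ ⬝ᵥ lxu *ᵥ δu + lx ⬝ᵥ ξ)
          + (1/2) * ((x' - A *ᵥ ξ - B *ᵥ δu - fbar) ⬝ᵥ Ω⁻¹ *ᵥ (x' - A *ᵥ ξ - B *ᵥ δu - fbar))
          + (1/2) * ((δy - C *ᵥ ξ) ⬝ᵥ Γ⁻¹ *ᵥ (δy - C *ᵥ ξ))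
          + (1/2) * ((ξ - xhat) ⬝ᵥ P⁻¹ *ᵥ (ξ - xhat))))
        ((1/2) * ((x' - xhat') ⬝ᵥ P'⁻¹ *ᵥ (x' - xhat')) + c)) ∧
    P'.IsSymm ∧ P'.PosDef := by
  set K := P⁻¹ + Cᵀ * Γ⁻¹ * C + σ • lxx
  set M := K + Aᵀ * Ω⁻¹ * A
  have hH_pd : H.PosDef := hH ▸ hpd.inv
  have hHK : H * K = 1 := hH ▸ nonsing_inv_mul K ((isUnit_iff_isUnit_det K).mp hpd.isUnit)
  have hHinv : H⁻¹ = K := hH ▸ nonsing_inv_nonsing_inv K ((isUnit_iff_isUnit_det K).mp hpd.isUnit)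
  have hM : M.PosDef :=
    hpd.add_posSemidef (by simpa using hΩ_pd.inv.posSemidef.conjTranspose_mul_mul_same A)
  have hP'_pd : P'.PosDef :=
    hP' ▸ hΩ_pd.add_posSemidef (by simpa using hH_pd.posSemidef.mul_mul_conjTranspose_same A)
  have hM_unit : IsUnit (H⁻¹ + Aᵀ * Ω⁻¹ * A) := hHinv ▸ hM.isUnit
  have hP'_inv : Ω⁻¹ - Ω⁻¹ * A * M⁻¹ * Aᵀ * Ω⁻¹ = P'⁻¹ := by
    rw [hP', add_mul_mul_inv_eq_sub Ω A H Aᵀ hΩ_pd.isUnit hH_pd.isUnit hM_unit, hHinv]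
  have hpush : Ω⁻¹ * A * M⁻¹ = P'⁻¹ * (A * H) := by
    rw [hP', add_mul_mul_inv_mul_mul_eq Ω A H Aᵀ hΩ_pd.isUnit hH_pd.isUnit hM_unit, hHinv]
  set w := B *ᵥ δu + fbar
  set d := Cᵀ *ᵥ (Γ⁻¹ *ᵥ δy) + P⁻¹ *ᵥ xhat - σ • (lxu *ᵥ δu + lx)
  have hxhat'_eq : xhat' = w + (A * H) *ᵥ d := by
    rw [hxhat', hG, mul_mulVec_information_eq_gain σ A hHK]
    simp only [w]
    abel
  refine ⟨⟨(1/2) * (δy ⬝ᵥ Γ⁻¹ *ᵥ δy) + (1/2) * (xhat ⬝ᵥ P⁻¹ *ᵥ xhat)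
      - (1/2) * (((A * H) *ᵥ d) ⬝ᵥ P'⁻¹ *ᵥ ((A * H) *ᵥ d) + d ⬝ᵥ M⁻¹ *ᵥ d), fun x' => ?_⟩,
    isHermitian_iff_isSymm.mp hP'_pd.isHermitian, hP'_pd⟩
  have hresidual : ∀ ξ, x' - A *ᵥ ξ - B *ᵥ δu - fbar = (x' - w) - A *ᵥ ξ := fun ξ => by
    simp only [w]; abel
  simp only [hresidual, stress_integrand_eq_quadratic σ lxx lxu lx δu
    (isHermitian_iff_isSymm.mp hΩ_pd.inv.isHermitian) A (x' - w) hΓ_symm.inv C δy hP_symm.inv xhat]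
  convert hM.isLeast_range_quadratic _ _ using 1
  have hschur := (isHermitian_iff_isSymm.mp hΩ_pd.inv.isHermitian).dotProduct_mulVec_sub_schur
    (isHermitian_iff_isSymm.mp hM.inv.isHermitian) A (A * H) hP'_inv hpush d (x' - w)
  rw [hxhat'_eq, sub_add_eq_sub_sub]
  linarith

/-- **Theorem 4 of the paper (past-stress forward recursion).** One step of the
risk-sensitive forward recursion with imperfect observations: extremizing the previous state
`ξ` out of the sum of the σ-scaled running cost, the process-noise penalty, the
measurement-noise penalty and the previous past stress yields the updated quadratic past
stress `(1/2)(x' - x̂')ᵀ P'⁻¹ (x' - x̂')` up to a constant, with `P'` symmetric positive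
definite. -/
theorem past_stress_forward_recursion
    (n p q : ℕ) (hn : 0 < n) (hp : 0 < p) (hq : 0 < q) (σ : ℝ)
    (P : Matrix (Fin n) (Fin n) ℝ) (hP_symm : P.IsSymm) (hP_pd : P.PosDef)
    (Ω : Matrix (Fin n) (Fin n) ℝ) (hΩ_symm : Ω.IsSymm) (hΩ_pd : Ω.PosDef)
    (Γ : Matrix (Fin q) (Fin q) ℝ) (hΓ_symm : Γ.IsSymm) (hΓ_pd : Γ.PosDef)
    (A : Matrix (Fin n) (Fin n) ℝ) (B : Matrix (Fin n) (Fin p) ℝ)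
    (C : Matrix (Fin q) (Fin n) ℝ) (fbar : Fin n → ℝ)
    (lxx : Matrix (Fin n) (Fin n) ℝ) (hlxx_symm : lxx.IsSymm)
    (lxu : Matrix (Fin n) (Fin p) ℝ) (lx : Fin n → ℝ)
    (xhat : Fin n → ℝ) (δu : Fin p → ℝ) (δy : Fin q → ℝ)
    (hpd : (P⁻¹ + Cᵀ * Γ⁻¹ * C + σ • lxx).PosDef)
    (H : Matrix (Fin n) (Fin n) ℝ) (hH : H = (P⁻¹ + Cᵀ * Γ⁻¹ * C + σ • lxx)⁻¹)
    (G : Matrix (Fin n) (Fin q) ℝ) (hG : G = A * H * Cᵀ * Γ⁻¹)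
    (P' : Matrix (Fin n) (Fin n) ℝ) (hP' : P' = Ω + A * H * Aᵀ)
    (xhat' : Fin n → ℝ)
    (hxhat' : xhat' = A *ᵥ xhat + B *ᵥ δu + fbar + G *ᵥ (δy - C *ᵥ xhat)
        - σ • ((A * H) *ᵥ (lxx *ᵥ xhat + lxu *ᵥ δu + lx))) :
    (∃ c : ℝ, ∀ x' : Fin n → ℝ,
      IsLeast (Set.range (fun ξ : Fin n → ℝ =>
          σ * ((1/2) * (ξ ⬝ᵥ lxx *ᵥ ξ) + ξ ⬝ᵥ lxu *ᵥ δu + lx ⬝ᵥ ξ)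
          + (1/2) * ((x' - A *ᵥ ξ - B *ᵥ δu - fbar) ⬝ᵥ Ω⁻¹ *ᵥ (x' - A *ᵥ ξ - B *ᵥ δu - fbar))
          + (1/2) * ((δy - C *ᵥ ξ) ⬝ᵥ Γ⁻¹ *ᵥ (δy - C *ᵥ ξ))
          + (1/2) * ((ξ - xhat) ⬝ᵥ P⁻¹ *ᵥ (ξ - xhat))))
        ((1/2) * ((x' - xhat') ⬝ᵥ P'⁻¹ *ᵥ (x' - xhat')) + c)) ∧
    P'.IsSymm ∧ P'.PosDef :=
  past_stress_forward_recursion_general n p q σ P hP_symm Ω hΩ_pd Γ hΓ_symm A B C fbar lxx lxu lx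
    xhat δu δy hpd H hH G hG P' hP' xhat' hxhat'
end

section
/- Let n be a positive integer, σ ≠ 0 a real number, P a symmetric positive definite n×n real matrix, V a symmetric n×n matrix, v ∈ ℝ^n, x̂ ∈ ℝ^n, and assume σ⁻¹P⁻¹ + V is positive definite. Then the matrix I + σPV is invertible, and the function x ↦ σ⁻¹·(1/2)·(x − x̂)ᵀP⁻¹(x − x̂) + (1/2)·xᵀVx + vᵀx attains its unique global minimum on ℝ^n at x̌ = (I + σPV)⁻¹·(x̂ − σPv). -/
open Matrix

/-!
Because `P⁻¹` is symmetric, the stress is, up to a constant, the quadratic cost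
`½ xᵀ A x - bᵀ x` with `A = σ⁻¹ P⁻¹ + V` and `b = σ⁻¹ P⁻¹ x̂ - v`. Completing the square, the
cost at `x` exceeds its value at the solution `x₀` of `A x₀ = b` by `½ (x - x₀)ᵀ A (x - x₀)`,
which is positive for `x ≠ x₀` since `A` is positive definite. Finally `I + σ P V = (σ P) A`
is a product of invertible matrices, and `A x₀ = b` is equivalent to
`x₀ = (I + σ P V)⁻¹ (x̂ - σ P v)`.
-/

namespace Matrix

variable {ι R : Type*} [Fintype ι]

section CommRing

variable [CommRing R] {A : Matrix ι ι R}

theorem IsSymm.dotProduct_mulVec_comm_s11 (hA : A.IsSymm) (x y : ι → R) :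
    x ⬝ᵥ A *ᵥ y = y ⬝ᵥ A *ᵥ x := by
  rw [dotProduct_mulVec, ← mulVec_transpose, hA.eq, dotProduct_comm]

theorem IsSymm.sub_dotProduct_mulVec_sub_s11 (hA : A.IsSymm) (x y : ι → R) :
    (x - y) ⬝ᵥ A *ᵥ (x - y) = x ⬝ᵥ A *ᵥ x - 2 * (x ⬝ᵥ A *ᵥ y) + y ⬝ᵥ A *ᵥ y := by
  simp only [mulVec_sub, dotProduct_sub, sub_dotProduct, hA.dotProduct_mulVec_comm_s11 y x]
  ring

end CommRing

section Field

variable [Field R] [DecidableEq ι]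

theorem one_add_smul_mul_eq_smul_mul {P : Matrix ι ι R} (hP : IsUnit P.det) {σ : R}
    (hσ : σ ≠ 0) (V : Matrix ι ι R) :
    1 + σ • (P * V) = σ • P * (σ⁻¹ • P⁻¹ + V) := by
  rw [Matrix.mul_add, smul_mul_smul_comm, mul_inv_cancel₀ hσ, one_smul,
    mul_nonsing_inv P hP, smul_mul_assoc]

theorem mulVec_nonsing_inv_mul_mulVec {A : Matrix ι ι R} (hA : IsUnit A.det)
    (S : Matrix ι ι R) (w : ι → R) :
    A *ᵥ ((S * A)⁻¹ *ᵥ w) = S⁻¹ *ᵥ w := by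
  rw [mul_inv_rev, ← mulVec_mulVec, mulVec_mulVec, mul_nonsing_inv A hA, one_mulVec]

end Field

noncomputable def quadraticCost (A : Matrix ι ι ℝ) (b x : ι → ℝ) : ℝ :=
  (1 / 2) * (x ⬝ᵥ A *ᵥ x) - b ⬝ᵥ x

theorem IsSymm.quadraticCost_eq {A : Matrix ι ι ℝ} (hA : A.IsSymm) {b x₀ : ι → ℝ}
    (hx₀ : A *ᵥ x₀ = b) (x : ι → ℝ) :
    quadraticCost A b x = quadraticCost A b x₀ + (1 / 2) * ((x - x₀) ⬝ᵥ A *ᵥ (x - x₀)) := by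
  have hb (y : ι → ℝ) : b ⬝ᵥ y = y ⬝ᵥ A *ᵥ x₀ := by rw [← hx₀, dotProduct_comm]
  rw [quadraticCost, quadraticCost, hA.sub_dotProduct_mulVec_sub_s11, hb, hb]
  ring

theorem PosDef.quadraticCost_lt {A : Matrix ι ι ℝ} (hA : A.PosDef) {b x₀ : ι → ℝ}
    (hx₀ : A *ᵥ x₀ = b) {x : ι → ℝ} (hx : x ≠ x₀) :
    quadraticCost A b x₀ < quadraticCost A b x := by
  have hpos : 0 < (x - x₀) ⬝ᵥ A *ᵥ (x - x₀) := by
    simpa only [star_trivial] using hA.dotProduct_mulVec_pos (sub_ne_zero.2 hx)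
  rw [(isHermitian_iff_isSymm.mp hA.isHermitian).quadraticCost_eq hx₀ x]
  linarith

end Matrix

theorem stress_eq_quadraticCost_add {ι : Type*} [Fintype ι] {Q : Matrix ι ι ℝ} (hQ : Q.IsSymm)
    (σ : ℝ) (V : Matrix ι ι ℝ) (v xhat x : ι → ℝ) :
    σ⁻¹ * ((1/2) * ((x - xhat) ⬝ᵥ Q *ᵥ (x - xhat))) + (1/2) * (x ⬝ᵥ V *ᵥ x) + v ⬝ᵥ x =
      quadraticCost (σ⁻¹ • Q + V) (σ⁻¹ • Q *ᵥ xhat - v) x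
        + σ⁻¹ * ((1/2) * (xhat ⬝ᵥ Q *ᵥ xhat)) := by
  rw [quadraticCost, hQ.sub_dotProduct_mulVec_sub_s11, add_mulVec, dotProduct_add, smul_mulVec,
    dotProduct_smul, sub_dotProduct, smul_dotProduct, dotProduct_comm (Q *ᵥ xhat),
    dotProduct_comm v, smul_eq_mul, smul_eq_mul]
  ring

theorem minimum_stress_estimate_general
    (n : ℕ) (σ : ℝ) (hσ : σ ≠ 0)
    (P : Matrix (Fin n) (Fin n) ℝ) (hP_pd : P.PosDef)
    (V : Matrix (Fin n) (Fin n) ℝ)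
    (v : Fin n → ℝ) (xhat : Fin n → ℝ)
    (hpd : (σ⁻¹ • P⁻¹ + V).PosDef)
    (g : (Fin n → ℝ) → ℝ)
    (hg : ∀ x, g x = σ⁻¹ * ((1/2) * ((x - xhat) ⬝ᵥ P⁻¹ *ᵥ (x - xhat)))
        + (1/2) * (x ⬝ᵥ V *ᵥ x) + v ⬝ᵥ x)
    (xcheck : Fin n → ℝ)
    (hxcheck : xcheck = (1 + σ • (P * V))⁻¹ *ᵥ (xhat - σ • (P *ᵥ v))) :
    IsUnit (1 + σ • (P * V)).det ∧
    ∀ x : Fin n → ℝ, x ≠ xcheck → g xcheck < g x := by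
  have hP : IsUnit P.det := (isUnit_iff_isUnit_det P).mp hP_pd.isUnit
  have hA : IsUnit (σ⁻¹ • P⁻¹ + V).det := (isUnit_iff_isUnit_det _).mp hpd.isUnit
  have hσP : IsUnit (σ • P).det := by
    rw [det_smul]; exact (isUnit_iff_ne_zero.2 (pow_ne_zero _ hσ)).mul hP
  have hfactor := one_add_smul_mul_eq_smul_mul hP hσ V
  refine ⟨by rw [hfactor, det_mul]; exact hσP.mul hA, fun x hx => ?_⟩
  have : Invertible σ := invertibleOfNonzero hσ
  have hstat : (σ⁻¹ • P⁻¹ + V) *ᵥ xcheck = σ⁻¹ • P⁻¹ *ᵥ xhat - v := by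
    rw [hxcheck, hfactor, mulVec_nonsing_inv_mul_mulVec hA, inv_smul P σ hP, invOf_eq_inv,
      mulVec_sub, smul_mulVec, mulVec_smul, mulVec_mulVec, smul_mul_assoc, nonsing_inv_mul P hP,
      smul_mulVec, one_mulVec, smul_smul, mul_inv_cancel₀ hσ, one_smul]
  have hQ : P⁻¹.IsSymm := isHermitian_iff_isSymm.mp hP_pd.inv.isHermitian
  rw [hg, hg, stress_eq_quadraticCost_add hQ, stress_eq_quadraticCost_add hQ]
  exact add_lt_add_left (hpd.quadraticCost_lt hstat hx) _

/-- **Minimum-stress state estimate (equation (33) of the paper):** with `P` symmetric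
positive definite, `V` symmetric and `σ⁻¹ P⁻¹ + V` positive definite, the matrix
`I + σ P V` is invertible and the total stress
`x ↦ σ⁻¹ (1/2)(x - x̂)ᵀ P⁻¹ (x - x̂) + (1/2) xᵀ V x + vᵀ x` attains its unique global
minimum at `x̌ = (I + σ P V)⁻¹ (x̂ - σ P v)`. -/
theorem minimum_stress_estimate
    (n : ℕ) (hn : 0 < n) (σ : ℝ) (hσ : σ ≠ 0)
    (P : Matrix (Fin n) (Fin n) ℝ) (hP_symm : P.IsSymm) (hP_pd : P.PosDef)
    (V : Matrix (Fin n) (Fin n) ℝ) (hV_symm : V.IsSymm)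
    (v : Fin n → ℝ) (xhat : Fin n → ℝ)
    (hpd : (σ⁻¹ • P⁻¹ + V).PosDef)
    (g : (Fin n → ℝ) → ℝ)
    (hg : ∀ x, g x = σ⁻¹ * ((1/2) * ((x - xhat) ⬝ᵥ P⁻¹ *ᵥ (x - xhat)))
        + (1/2) * (x ⬝ᵥ V *ᵥ x) + v ⬝ᵥ x)
    (xcheck : Fin n → ℝ)
    (hxcheck : xcheck = (1 + σ • (P * V))⁻¹ *ᵥ (xhat - σ • (P *ᵥ v))) :
    IsUnit (1 + σ • (P * V)).det ∧
    ∀ x : Fin n → ℝ, x ≠ xcheck → g xcheck < g x :=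
  minimum_stress_estimate_general n σ hσ P hP_pd V v xhat hpd g hg xcheck hxcheck
end

section
/- Let n, p be positive integers, T ≥ 1 an integer, and σ > 0 a real number. For t = 0,…,T−1 let A(t) be an n×n real matrix, B(t) an n×p matrix, f̄(t+1) ∈ ℝ^n, Ω(t+1) a symmetric positive definite n×n matrix, and let l_t(δx,δu) = (1/2)·δxᵀ l_xx(t) δx + δuᵀ l_ux(t) δx + (1/2)·δuᵀ l_uu(t) δu + l_x(t)ᵀδx + l_u(t)ᵀδu with l_xx(t), l_uu(t) symmetric; let l_xx(T) be symmetric and l_x(T) ∈ ℝ^n. Define the future stress functions backward by F_T(x) = (1/2)·xᵀ l_xx(T) x + l_x(T)ᵀx and, for t = T−1,…,0, F_t(x) = inf over δu ∈ ℝ^p and x' ∈ ℝ^n of [l_t(x,δu) + (2σ)⁻¹·(x' − A(t)x − B(t)δu − f̄(t+1))ᵀΩ(t+1)⁻¹(x' − A(t)x − B(t)δu − f̄(t+1)) + F_{t+1}(x')]. Suppose that, in the backward recursion V(T) = l_xx(T), v(T) = l_x(T), v̄(T) = 0; M(t) = (σΩ(t+1) + V(t+1)⁻¹)⁻¹, N(t)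 = v(t+1) − σM(t)Ω(t+1)v(t+1); Q_x(t) = l_x(t) + A(t)ᵀM(t)f̄(t+1) + A(t)ᵀN(t), Q_u(t) = l_u(t) + B(t)ᵀN(t) + B(t)ᵀM(t)f̄(t+1), Q_uu(t) = l_uu(t) + B(t)ᵀM(t)B(t), Q_ux(t) = l_ux(t) + B(t)ᵀM(t)A(t), Q_xx(t) = l_xx(t) + A(t)ᵀM(t)A(t); V(t) = Q_xx(t) − Q_ux(t)ᵀQ_uu(t)⁻¹Q_ux(t), v(t) = Q_x(t) − Q_ux(t)ᵀQ_uu(t)⁻¹Q_u(t), v̄(t) = v̄(t+1) + f̄(t+1)ᵀN(t) + (1/2)·f̄(t+1)ᵀM(t)f̄(t+1) − (1/2)·v(t+1)ᵀ(V(t+1) + σ⁻¹Ω(t+1)⁻¹)⁻¹v(t+1) − (1/2)·Q_u(t)ᵀQ_uu(t)⁻¹Q_u(t), it holds for every t that V(t+1) is invertible, σ⁻¹Ω(t+1)⁻¹ + V(t+1) is positive definite, and Q_uu(t) is positive definite. Then for every t = 0,…,T and every x ∈ ℝ^n, the infimum defining F_t(x) is attained and F_t(x) = (1/2)·xᵀV(t)x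 + v(t)ᵀx + v̄(t). -/
/-!
Backward induction from `F_T`. In the step, the objective is quadratic in `(δu, x')`.
Minimising over `x'` first is an infimal convolution of the noise penalty `½ ωᵀ P ω`,
`P = σ⁻¹ Ω⁻¹`, with the quadratic `F_{t+1}`: completing the square with Hessian `P + V(t+1)`
leaves a quadratic in `c = A x + B δu + f̄` whose Hessian is the parallel sum
`M = (P⁻¹ + V(t+1)⁻¹)⁻¹ = P - P (P + V(t+1))⁻¹ P`. Substituting the affine `c` gives a
quadratic in `δu` with Hessian `Q_uu`, and minimising over `δu` leaves the Schur complement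
`V(t) = Q_xx - Q_uxᵀ Q_uu⁻¹ Q_ux`.
-/

open Matrix BigOperators

open Set

section ParallelSum

variable {ι R : Type*} [Fintype ι] [DecidableEq ι] [CommRing R] {P V : Matrix ι ι R}

theorem Matrix.inv_add_inv_inv_eq (hP : IsUnit P.det) (hV : IsUnit V.det)
    (hPV : IsUnit (P + V).det) : (P⁻¹ + V⁻¹)⁻¹ = P * (P + V)⁻¹ * V := by
  apply inv_eq_right_inv
  have h : (P⁻¹ + V⁻¹) * P = V⁻¹ * (P + V) := by
    rw [add_mul, mul_add, nonsing_inv_mul _ hP, nonsing_inv_mul _ hV, add_comm]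
  rw [← Matrix.mul_assoc, ← Matrix.mul_assoc, h, Matrix.mul_assoc V⁻¹,
    mul_nonsing_inv _ hPV, Matrix.mul_one, nonsing_inv_mul _ hV]

theorem Matrix.sub_mul_inv_add_mul (hP : IsUnit P.det) (hV : IsUnit V.det)
    (hPV : IsUnit (P + V).det) : P - P * (P + V)⁻¹ * P = (P⁻¹ + V⁻¹)⁻¹ := by
  rw [inv_add_inv_inv_eq hP hV hPV, sub_eq_iff_eq_add, Matrix.mul_assoc, Matrix.mul_assoc,
    ← Matrix.mul_add, ← Matrix.mul_add, add_comm V, nonsing_inv_mul _ hPV, Matrix.mul_one]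

theorem Matrix.mul_inv_add (hP : IsUnit P.det) (hV : IsUnit V.det)
    (hPV : IsUnit (P + V).det) : P * (P + V)⁻¹ = 1 - (P⁻¹ + V⁻¹)⁻¹ * P⁻¹ := by
  have hVP : IsUnit (V + P).det := add_comm P V ▸ hPV
  rw [add_comm P⁻¹, inv_add_inv_inv_eq hV hP hVP, Matrix.mul_assoc, mul_nonsing_inv _ hP,
    Matrix.mul_one, add_comm V, eq_sub_iff_add_eq, ← Matrix.add_mul, mul_nonsing_inv _ hPV]

end ParallelSum

theorem Matrix.PosDef.isSymm {ι : Type*} {H : Matrix ι ι ℝ} (hH : H.PosDef) : H.IsSymm :=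
  isHermitian_iff_isSymm.mp hH.isHermitian

section Quadratic

variable {ι κ μ : Type*} [Fintype ι] [Fintype κ] [Fintype μ]

noncomputable def quadratic (H : Matrix ι ι ℝ) (b : ι → ℝ) (c : ℝ) (y : ι → ℝ) : ℝ :=
  1 / 2 * (y ⬝ᵥ H *ᵥ y) + b ⬝ᵥ y + c

theorem Matrix.IsSymm.dotProduct_mulVec_comm_s13 {R : Type*} [CommSemiring R] {S : Matrix ι ι R}
    (hS : S.IsSymm) (x y : ι → R) : x ⬝ᵥ S *ᵥ y = y ⬝ᵥ S *ᵥ x := by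
  rw [← dotProduct_transpose_mulVec, hS.eq]

theorem Matrix.mulVec_dotProduct {R : Type*} [CommSemiring R] (A : Matrix ι κ R) (x : κ → R)
    (y : ι → R) : (A *ᵥ x) ⬝ᵥ y = x ⬝ᵥ Aᵀ *ᵥ y := by
  rw [dotProduct_comm, dotProduct_transpose_mulVec]

theorem quadratic_add (H H' : Matrix ι ι ℝ) (b b' : ι → ℝ) (c c' : ℝ) (y : ι → ℝ) :
    quadratic H b c y + quadratic H' b' c' y = quadratic (H + H') (b + b') (c + c') y := by
  simp only [quadratic, add_mulVec, dotProduct_add, add_dotProduct]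
  ring

theorem quadratic_sub (H H' : Matrix ι ι ℝ) (b b' : ι → ℝ) (c c' : ℝ) (y : ι → ℝ) :
    quadratic H b c y - quadratic H' b' c' y = quadratic (H - H') (b - b') (c - c') y := by
  simp only [quadratic, sub_mulVec, dotProduct_sub, sub_dotProduct]
  ring

theorem quadratic_mulVec (M : Matrix ι ι ℝ) (N : ι → ℝ) (k : ℝ) (A : Matrix ι κ ℝ)
    (x : κ → ℝ) : quadratic M N k (A *ᵥ x) = quadratic (Aᵀ * M * A) (Aᵀ *ᵥ N) k x := by
  rw [quadratic, quadratic, ← mulVec_mulVec, ← mulVec_mulVec, mulVec_dotProduct,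
    mulVec_dotProduct, transpose_transpose, dotProduct_comm N]

theorem quadratic_add_right {M : Matrix ι ι ℝ} (hM : M.IsSymm) (N : ι → ℝ) (k : ℝ)
    (y z : ι → ℝ) : quadratic M N k (y + z) = quadratic M (N + M *ᵥ z) (quadratic M N k z) y := by
  simp only [quadratic, mulVec_add, dotProduct_add, add_dotProduct]
  rw [hM.dotProduct_mulVec_comm_s13 z y, dotProduct_comm (M *ᵥ z) y]
  ring

theorem quadratic_affine {M : Matrix ι ι ℝ} (hM : M.IsSymm) (N : ι → ℝ) (k : ℝ)
    (A : Matrix ι κ ℝ) (B : Matrix ι μ ℝ) (f : ι → ℝ) (x : κ → ℝ) (u : μ → ℝ) :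
    quadratic M N k (A *ᵥ x + B *ᵥ u + f) =
      quadratic (Bᵀ * M * B) (Bᵀ *ᵥ (N + M *ᵥ (A *ᵥ x + f)))
        (quadratic (Aᵀ * M * A) (Aᵀ *ᵥ (N + M *ᵥ f)) (quadratic M N k f) x) u := by
  rw [add_right_comm, add_comm, quadratic_add_right hM, quadratic_mulVec,
    quadratic_add_right hM, quadratic_mulVec]

theorem half_dotProduct_mulVec_eq_quadratic (S : Matrix ι ι ℝ) (y : ι → ℝ) :
    1 / 2 * (y ⬝ᵥ S *ᵥ y) = quadratic S 0 0 y := by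
  simp [quadratic]

theorem isLeast_quadratic [DecidableEq ι] {H : Matrix ι ι ℝ} (hH : H.PosDef) (b : ι → ℝ)
    (c : ℝ) : IsLeast (range (quadratic H b c)) (c - 1 / 2 * (b ⬝ᵥ H⁻¹ *ᵥ b)) := by
  have hHb : H *ᵥ (H⁻¹ *ᵥ b) = b := by
    rw [mulVec_mulVec, mul_nonsing_inv _ ((isUnit_iff_isUnit_det H).mp hH.isUnit), one_mulVec]
  have hsquare : ∀ y, quadratic H b c y =
      1 / 2 * ((y + H⁻¹ *ᵥ b) ⬝ᵥ H *ᵥ (y + H⁻¹ *ᵥ b)) + (c - 1 / 2 * (b ⬝ᵥ H⁻¹ *ᵥ b)) := by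
    intro y
    rw [half_dotProduct_mulVec_eq_quadratic, quadratic_add_right hH.isSymm, zero_add, hHb]
    simp only [quadratic, hHb, zero_dotProduct, dotProduct_comm b]
    ring
  refine ⟨⟨-(H⁻¹ *ᵥ b), by simp [hsquare]⟩, ?_⟩
  rintro _ ⟨y, rfl⟩
  rw [hsquare y, le_add_iff_nonneg_left]
  have hnonneg := hH.posSemidef.dotProduct_mulVec_nonneg (y + H⁻¹ *ᵥ b)
  rw [star_trivial] at hnonneg
  exact mul_nonneg (by norm_num) hnonneg

theorem quadratic_sub_half_dotProduct {S : Matrix κ κ ℝ} (hS : S.IsSymm) (Q : Matrix ι ι ℝ)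
    (b : ι → ℝ) (k : ℝ) (K : Matrix κ ι ℝ) (q : κ → ℝ) (x : ι → ℝ) :
    quadratic Q b k x - 1 / 2 * ((K *ᵥ x + q) ⬝ᵥ S *ᵥ (K *ᵥ x + q)) =
      quadratic (Q - Kᵀ * S * K) (b - (Kᵀ * S) *ᵥ q) (k - 1 / 2 * (q ⬝ᵥ S *ᵥ q)) x := by
  rw [half_dotProduct_mulVec_eq_quadratic, quadratic_add_right hS, quadratic_mulVec,
    quadratic_sub, zero_add, mulVec_mulVec]
  simp [quadratic]

theorem isLeast_range_prod {α β γ : Type*} [Preorder γ] {G : α × β → γ} {h : α → γ} {m : γ}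
    (hG : ∀ a, IsLeast (range fun b => G (a, b)) (h a)) (hh : IsLeast (range h) m) :
    IsLeast (range G) m := by
  obtain ⟨⟨a, rfl⟩, hlow⟩ := hh
  obtain ⟨⟨b, hb⟩, -⟩ := hG a
  refine ⟨⟨(a, b), hb⟩, ?_⟩
  rintro _ ⟨⟨a', b'⟩, rfl⟩
  exact (hlow ⟨a', rfl⟩).trans ((hG a').2 ⟨b', rfl⟩)

theorem isLeast_infConv_quadratic [DecidableEq ι] {P V : Matrix ι ι ℝ} (hP : P.IsSymm)
    (hPu : IsUnit P.det) (hVu : IsUnit V.det) (hPV : (P + V).PosDef) (v : ι → ℝ) (k : ℝ)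
    (c : ι → ℝ) :
    IsLeast (range fun y => 1 / 2 * ((y - c) ⬝ᵥ P *ᵥ (y - c)) + quadratic V v k y)
      (quadratic (P⁻¹ + V⁻¹)⁻¹ (v - ((P⁻¹ + V⁻¹)⁻¹ * P⁻¹) *ᵥ v)
        (k - 1 / 2 * (v ⬝ᵥ (P + V)⁻¹ *ᵥ v)) c) := by
  have hPVu := (isUnit_iff_isUnit_det _).mp hPV.isUnit
  have hobj : (fun y => 1 / 2 * ((y - c) ⬝ᵥ P *ᵥ (y - c)) + quadratic V v k y) =
      quadratic (P + V) (v - P *ᵥ c) (k + 1 / 2 * (c ⬝ᵥ P *ᵥ c)) := by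
    funext y
    rw [half_dotProduct_mulVec_eq_quadratic, sub_eq_add_neg, quadratic_add_right hP,
      quadratic_add]
    simp only [quadratic, mulVec_neg, zero_add, zero_dotProduct, neg_add_eq_sub, add_zero,
      neg_dotProduct_neg]
    ring
  have hMP : (P⁻¹ + V⁻¹)⁻¹ * P⁻¹ = 1 - P * (P + V)⁻¹ := by
    rw [mul_inv_add hPu hVu hPVu, sub_sub_cancel]
  rw [hobj, hMP, ← sub_mul_inv_add_mul hPu hVu hPVu]
  convert isLeast_quadratic hPV _ _ using 1
  have hS := hPV.isSymm.inv
  simp only [quadratic, sub_mulVec, one_mulVec, sub_sub_cancel, dotProduct_sub, sub_dotProduct,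
    ← mulVec_mulVec, mulVec_sub, mulVec_dotProduct, hP.eq, hS.eq]
  rw [hP.dotProduct_mulVec_comm_s13 c ((P + V)⁻¹ *ᵥ v), mulVec_dotProduct, hS.eq]
  ring

theorem isLeast_stress_step [DecidableEq ι] [DecidableEq κ] {σ : ℝ} (hσ : σ ≠ 0)
    {Ω V' : Matrix ι ι ℝ} (hΩ : Ω.PosDef) (hV' : IsUnit V'.det) (hPV : (σ⁻¹ • Ω⁻¹ + V').PosDef)
    (A : Matrix ι ι ℝ) (B : Matrix ι κ ℝ) (f : ι → ℝ) (lxx : Matrix ι ι ℝ)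
    (lux : Matrix κ ι ℝ) (luu : Matrix κ κ ℝ) (lx : ι → ℝ) (lu : κ → ℝ) (v' : ι → ℝ)
    (vbar' : ℝ) {M : Matrix ι ι ℝ} {N Qx : ι → ℝ} {Qu : κ → ℝ} {Quu : Matrix κ κ ℝ}
    {Qux : Matrix κ ι ℝ} {Qxx : Matrix ι ι ℝ}
    (hM : M = (σ • Ω + V'⁻¹)⁻¹) (hN : N = v' - σ • ((M * Ω) *ᵥ v'))
    (hQx : Qx = lx + Aᵀ *ᵥ (M *ᵥ f) + Aᵀ *ᵥ N) (hQu : Qu = lu + Bᵀ *ᵥ N + Bᵀ *ᵥ (M *ᵥ f))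
    (hQuu : Quu = luu + Bᵀ * M * B) (hQux : Qux = lux + Bᵀ * M * A)
    (hQxx : Qxx = lxx + Aᵀ * M * A) (hQuu_pd : Quu.PosDef) (x : ι → ℝ)
    {G : (κ → ℝ) × (ι → ℝ) → ℝ}
    (hG : ∀ u y, G (u, y) = 1 / 2 * (x ⬝ᵥ lxx *ᵥ x) + u ⬝ᵥ lux *ᵥ x + 1 / 2 * (u ⬝ᵥ luu *ᵥ u)
      + lx ⬝ᵥ x + lu ⬝ᵥ u
      + (2 * σ)⁻¹ * ((y - A *ᵥ x - B *ᵥ u - f) ⬝ᵥ Ω⁻¹ *ᵥ (y - A *ᵥ x - B *ᵥ u - f))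
      + quadratic V' v' vbar' y) :
    IsLeast (range G) (quadratic (Qxx - Quxᵀ * Quu⁻¹ * Qux) (Qx - (Quxᵀ * Quu⁻¹) *ᵥ Qu)
      (vbar' + f ⬝ᵥ N + 1 / 2 * (f ⬝ᵥ M *ᵥ f) - 1 / 2 * (v' ⬝ᵥ (V' + σ⁻¹ • Ω⁻¹)⁻¹ *ᵥ v')
        - 1 / 2 * (Qu ⬝ᵥ Quu⁻¹ *ᵥ Qu)) x) := by
  set P := σ⁻¹ • Ω⁻¹ with hP
  have hPinv : P * (σ • Ω) = 1 := by
    rw [hP, smul_mul_smul_comm, inv_mul_cancel₀ hσ,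
      nonsing_inv_mul _ ((isUnit_iff_isUnit_det _).mp hΩ.isUnit), one_smul]
  have hPsymm : P.IsSymm := hΩ.isSymm.inv.smul _
  have hPu : IsUnit P.det := isUnit_det_of_right_inverse hPinv
  have hPVu : IsUnit (P + V').det := (isUnit_iff_isUnit_det _).mp hPV.isUnit
  rw [← inv_eq_right_inv hPinv] at hM
  have hN' : N = v' - (M * P⁻¹) *ᵥ v' := by
    rw [hN, inv_eq_right_inv hPinv, mul_smul_comm, smul_mulVec]
  have hMsymm : M.IsSymm := by
    rw [hM, ← sub_mul_inv_add_mul hPu hV' hPVu]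
    refine hPsymm.sub ?_
    simp [IsSymm, transpose_mul, hPsymm.eq, hPV.isSymm.inv.eq, Matrix.mul_assoc]
  set k' := vbar' - 1 / 2 * (v' ⬝ᵥ (P + V')⁻¹ *ᵥ v')
  have hinner : ∀ u, IsLeast (range fun y => G (u, y))
      (quadratic luu (lux *ᵥ x + lu) (quadratic lxx lx 0 x) u
        + quadratic M N k' (A *ᵥ x + B *ᵥ u + f)) := by
    intro u
    convert isLeast_infConv_quadratic hPsymm hPu hV' hPV v'
      (quadratic luu (lux *ᵥ x + lu) (quadratic lxx lx 0 x) u + vbar') (A *ᵥ x + B *ᵥ u + f)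
      using 1
    · congr 1
      funext y
      simp only [hG, quadratic, sub_sub, hP, smul_mulVec, dotProduct_smul, smul_eq_mul,
        add_dotProduct, dotProduct_comm (lux *ᵥ x) u]
      ring
    · rw [hN', hM]
      simp only [quadratic, k']
      ring
  have hbu : lux *ᵥ x + lu + Bᵀ *ᵥ (N + M *ᵥ (A *ᵥ x + f)) = Qux *ᵥ x + Qu := by
    rw [hQux, hQu]
    simp only [add_mulVec, mulVec_add, ← mulVec_mulVec]
    abel
  have hbx : lx + Aᵀ *ᵥ (N + M *ᵥ f) = Qx := by
    rw [hQx, mulVec_add]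
    abel
  have houter : (fun u => quadratic luu (lux *ᵥ x + lu) (quadratic lxx lx 0 x) u
      + quadratic M N k' (A *ᵥ x + B *ᵥ u + f)) =
      quadratic Quu (Qux *ᵥ x + Qu) (quadratic Qxx Qx (quadratic M N k' f) x) := by
    funext u
    rw [quadratic_affine hMsymm, quadratic_add, quadratic_add, zero_add, hbu, hbx, hQuu, hQxx]
  have hconst : vbar' + f ⬝ᵥ N + 1 / 2 * (f ⬝ᵥ M *ᵥ f) - 1 / 2 * (v' ⬝ᵥ (V' + P)⁻¹ *ᵥ v') =
      quadratic M N k' f := by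
    simp only [quadratic, k', add_comm V' P, dotProduct_comm f N]
    ring
  refine isLeast_range_prod hinner ?_
  rw [houter, ← quadratic_sub_half_dotProduct hQuu_pd.isSymm.inv, hconst]
  exact isLeast_quadratic hQuu_pd _ _

end Quadratic

theorem future_stress_backward_induction_general
    (n p T : ℕ) (σ : ℝ) (hσ : 0 < σ)
    (A : ℕ → Matrix (Fin n) (Fin n) ℝ) (B : ℕ → Matrix (Fin n) (Fin p) ℝ)
    (fbar : ℕ → (Fin n → ℝ))
    (Ω : ℕ → Matrix (Fin n) (Fin n) ℝ) (hΩ_pd : ∀ t < T, (Ω (t+1)).PosDef)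
    (lxx : ℕ → Matrix (Fin n) (Fin n) ℝ)
    (lux : ℕ → Matrix (Fin p) (Fin n) ℝ)
    (luu : ℕ → Matrix (Fin p) (Fin p) ℝ)
    (lx : ℕ → (Fin n → ℝ)) (lu : ℕ → (Fin p → ℝ))
    -- the quadratic running cost `l_t`
    (l : ℕ → (Fin n → ℝ) → (Fin p → ℝ) → ℝ)
    (hl : ∀ t < T, ∀ (δx : Fin n → ℝ) (δu : Fin p → ℝ),
        l t δx δu = (1/2) * (δx ⬝ᵥ lxx t *ᵥ δx) + δu ⬝ᵥ lux t *ᵥ δx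
          + (1/2) * (δu ⬝ᵥ luu t *ᵥ δu) + lx t ⬝ᵥ δx + lu t ⬝ᵥ δu)
    -- the future stress `F`, and the one-step objective `g` whose infimum over
    -- `(δu, x')` defines `F_t` backward
    (F : ℕ → (Fin n → ℝ) → ℝ)
    (g : ℕ → (Fin n → ℝ) → ((Fin p → ℝ) × (Fin n → ℝ)) → ℝ)
    (hg : ∀ t < T, ∀ (x : Fin n → ℝ) (δu : Fin p → ℝ) (x' : Fin n → ℝ),
        g t x (δu, x') = l t x δu
          + (2*σ)⁻¹ * ((x' - A t *ᵥ x - B t *ᵥ δu - fbar (t+1)) ⬝ᵥ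
              (Ω (t+1))⁻¹ *ᵥ (x' - A t *ᵥ x - B t *ᵥ δu - fbar (t+1)))
          + F (t+1) x')
    (hFT : ∀ x, F T x = (1/2) * (x ⬝ᵥ lxx T *ᵥ x) + lx T ⬝ᵥ x)
    (hFt : ∀ t < T, ∀ x, F t x = ⨅ q : (Fin p → ℝ) × (Fin n → ℝ), g t x q)
    -- the backward Riccati-type recursion
    (V : ℕ → Matrix (Fin n) (Fin n) ℝ) (v : ℕ → (Fin n → ℝ)) (vbar : ℕ → ℝ)
    (M : ℕ → Matrix (Fin n) (Fin n) ℝ) (N : ℕ → (Fin n → ℝ))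
    (Qx : ℕ → (Fin n → ℝ)) (Qu : ℕ → (Fin p → ℝ))
    (Quu : ℕ → Matrix (Fin p) (Fin p) ℝ) (Qux : ℕ → Matrix (Fin p) (Fin n) ℝ)
    (Qxx : ℕ → Matrix (Fin n) (Fin n) ℝ)
    (hVT : V T = lxx T) (hvT : v T = lx T) (hvbarT : vbar T = 0)
    (hM : ∀ t < T, M t = (σ • Ω (t+1) + (V (t+1))⁻¹)⁻¹)
    (hN : ∀ t < T, N t = v (t+1) - σ • ((M t * Ω (t+1)) *ᵥ v (t+1)))
    (hQx : ∀ t < T, Qx t = lx t + (A t)ᵀ *ᵥ (M t *ᵥ fbar (t+1)) + (A t)ᵀ *ᵥ N t)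
    (hQu : ∀ t < T, Qu t = lu t + (B t)ᵀ *ᵥ N t + (B t)ᵀ *ᵥ (M t *ᵥ fbar (t+1)))
    (hQuu : ∀ t < T, Quu t = luu t + (B t)ᵀ * M t * B t)
    (hQux : ∀ t < T, Qux t = lux t + (B t)ᵀ * M t * A t)
    (hQxx : ∀ t < T, Qxx t = lxx t + (A t)ᵀ * M t * A t)
    (hV : ∀ t < T, V t = Qxx t - (Qux t)ᵀ * (Quu t)⁻¹ * Qux t)
    (hv : ∀ t < T, v t = Qx t - ((Qux t)ᵀ * (Quu t)⁻¹) *ᵥ Qu t)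
    (hvbar : ∀ t < T, vbar t = vbar (t+1) + fbar (t+1) ⬝ᵥ N t
        + (1/2) * (fbar (t+1) ⬝ᵥ M t *ᵥ fbar (t+1))
        - (1/2) * (v (t+1) ⬝ᵥ (V (t+1) + σ⁻¹ • (Ω (t+1))⁻¹)⁻¹ *ᵥ v (t+1))
        - (1/2) * (Qu t ⬝ᵥ (Quu t)⁻¹ *ᵥ Qu t))
    -- the well-posedness conditions along the recursion
    (hV_inv : ∀ t < T, IsUnit (V (t+1)).det)
    (hV_pd : ∀ t < T, (σ⁻¹ • (Ω (t+1))⁻¹ + V (t+1)).PosDef)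
    (hQuu_pd : ∀ t < T, (Quu t).PosDef) :
    ∀ t ≤ T, ∀ x : Fin n → ℝ,
      F t x = (1/2) * (x ⬝ᵥ V t *ᵥ x) + v t ⬝ᵥ x + vbar t ∧
      (t < T → IsLeast (Set.range (g t x)) (F t x)) := by
  have hstep : ∀ t < T, (∀ y, F (t+1) y = quadratic (V (t+1)) (v (t+1)) (vbar (t+1)) y) →
      ∀ x, IsLeast (range (g t x)) (quadratic (V t) (v t) (vbar t) x) := by
    intro t ht hF x
    rw [hV t ht, hv t ht, hvbar t ht]
    exact isLeast_stress_step hσ.ne' (hΩ_pd t ht) (hV_inv t ht) (hV_pd t ht) (A t) (B t)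
      (fbar (t+1)) (lxx t) (lux t) (luu t) (lx t) (lu t) (v (t+1)) (vbar (t+1)) (hM t ht)
      (hN t ht) (hQx t ht) (hQu t ht) (hQuu t ht) (hQux t ht) (hQxx t ht) (hQuu_pd t ht) x
      fun u y => by rw [hg t ht, hl t ht, hF]
  have hF : ∀ t ≤ T, ∀ x, F t x = quadratic (V t) (v t) (vbar t) x := by
    intro t ht
    induction ht using Nat.decreasingInduction with
    | self => intro x; simp [hFT, hVT, hvT, hvbarT, quadratic]
    | of_succ t ht hF => intro x; rw [hFt t ht x]; exact (hstep t ht hF x).isGLB.ciInf_eq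
  intro t ht x
  exact ⟨hF t ht x, fun htT => hF t ht x ▸ hstep t htT (hF (t+1) htT) x⟩

/-- **Combined Theorems 1 and 2 of the paper: the full backward induction for the future
stress.** For the linearized risk-sensitive problem with deviation dynamics
`x' = A(t) x + B(t) δu + f̄(t+1) + ω` and σ-scaled noise penalties, the future stress
`F_t(x)` (defined by backward infimization over controls and next states) is, under the
stated invertibility/positive-definiteness conditions along the Riccati-type recursion,
an explicit quadratic `(1/2) xᵀ V(t) x + v(t)ᵀ x + v̄(t)`, and each infimum is attained. -/
theorem future_stress_backward_induction
    (n p T : ℕ) (hn : 0 < n) (hp : 0 < p) (hT : 1 ≤ T) (σ : ℝ) (hσ : 0 < σ)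
    (A : ℕ → Matrix (Fin n) (Fin n) ℝ) (B : ℕ → Matrix (Fin n) (Fin p) ℝ)
    (fbar : ℕ → (Fin n → ℝ))
    (Ω : ℕ → Matrix (Fin n) (Fin n) ℝ) (hΩ_pd : ∀ t < T, (Ω (t+1)).PosDef)
    (lxx : ℕ → Matrix (Fin n) (Fin n) ℝ) (hlxx_symm : ∀ t ≤ T, (lxx t).IsSymm)
    (lux : ℕ → Matrix (Fin p) (Fin n) ℝ)
    (luu : ℕ → Matrix (Fin p) (Fin p) ℝ) (hluu_symm : ∀ t < T, (luu t).IsSymm)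
    (lx : ℕ → (Fin n → ℝ)) (lu : ℕ → (Fin p → ℝ))
    -- the quadratic running cost `l_t`
    (l : ℕ → (Fin n → ℝ) → (Fin p → ℝ) → ℝ)
    (hl : ∀ t < T, ∀ (δx : Fin n → ℝ) (δu : Fin p → ℝ),
        l t δx δu = (1/2) * (δx ⬝ᵥ lxx t *ᵥ δx) + δu ⬝ᵥ lux t *ᵥ δx
          + (1/2) * (δu ⬝ᵥ luu t *ᵥ δu) + lx t ⬝ᵥ δx + lu t ⬝ᵥ δu)
    -- the future stress `F`, and the one-step objective `g` whose infimum over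
    -- `(δu, x')` defines `F_t` backward
    (F : ℕ → (Fin n → ℝ) → ℝ)
    (g : ℕ → (Fin n → ℝ) → ((Fin p → ℝ) × (Fin n → ℝ)) → ℝ)
    (hg : ∀ t < T, ∀ (x : Fin n → ℝ) (δu : Fin p → ℝ) (x' : Fin n → ℝ),
        g t x (δu, x') = l t x δu
          + (2*σ)⁻¹ * ((x' - A t *ᵥ x - B t *ᵥ δu - fbar (t+1)) ⬝ᵥ
              (Ω (t+1))⁻¹ *ᵥ (x' - A t *ᵥ x - B t *ᵥ δu - fbar (t+1)))
          + F (t+1) x')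
    (hFT : ∀ x, F T x = (1/2) * (x ⬝ᵥ lxx T *ᵥ x) + lx T ⬝ᵥ x)
    (hFt : ∀ t < T, ∀ x, F t x = ⨅ q : (Fin p → ℝ) × (Fin n → ℝ), g t x q)
    -- the backward Riccati-type recursion
    (V : ℕ → Matrix (Fin n) (Fin n) ℝ) (v : ℕ → (Fin n → ℝ)) (vbar : ℕ → ℝ)
    (M : ℕ → Matrix (Fin n) (Fin n) ℝ) (N : ℕ → (Fin n → ℝ))
    (Qx : ℕ → (Fin n → ℝ)) (Qu : ℕ → (Fin p → ℝ))
    (Quu : ℕ → Matrix (Fin p) (Fin p) ℝ) (Qux : ℕ → Matrix (Fin p) (Fin n) ℝ)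
    (Qxx : ℕ → Matrix (Fin n) (Fin n) ℝ)
    (hVT : V T = lxx T) (hvT : v T = lx T) (hvbarT : vbar T = 0)
    (hM : ∀ t < T, M t = (σ • Ω (t+1) + (V (t+1))⁻¹)⁻¹)
    (hN : ∀ t < T, N t = v (t+1) - σ • ((M t * Ω (t+1)) *ᵥ v (t+1)))
    (hQx : ∀ t < T, Qx t = lx t + (A t)ᵀ *ᵥ (M t *ᵥ fbar (t+1)) + (A t)ᵀ *ᵥ N t)
    (hQu : ∀ t < T, Qu t = lu t + (B t)ᵀ *ᵥ N t + (B t)ᵀ *ᵥ (M t *ᵥ fbar (t+1)))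
    (hQuu : ∀ t < T, Quu t = luu t + (B t)ᵀ * M t * B t)
    (hQux : ∀ t < T, Qux t = lux t + (B t)ᵀ * M t * A t)
    (hQxx : ∀ t < T, Qxx t = lxx t + (A t)ᵀ * M t * A t)
    (hV : ∀ t < T, V t = Qxx t - (Qux t)ᵀ * (Quu t)⁻¹ * Qux t)
    (hv : ∀ t < T, v t = Qx t - ((Qux t)ᵀ * (Quu t)⁻¹) *ᵥ Qu t)
    (hvbar : ∀ t < T, vbar t = vbar (t+1) + fbar (t+1) ⬝ᵥ N t
        + (1/2) * (fbar (t+1) ⬝ᵥ M t *ᵥ fbar (t+1))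
        - (1/2) * (v (t+1) ⬝ᵥ (V (t+1) + σ⁻¹ • (Ω (t+1))⁻¹)⁻¹ *ᵥ v (t+1))
        - (1/2) * (Qu t ⬝ᵥ (Quu t)⁻¹ *ᵥ Qu t))
    -- the well-posedness conditions along the recursion
    (hV_inv : ∀ t < T, IsUnit (V (t+1)).det)
    (hV_pd : ∀ t < T, (σ⁻¹ • (Ω (t+1))⁻¹ + V (t+1)).PosDef)
    (hQuu_pd : ∀ t < T, (Quu t).PosDef) :
    ∀ t ≤ T, ∀ x : Fin n → ℝ,
      F t x = (1/2) * (x ⬝ᵥ V t *ᵥ x) + v t ⬝ᵥ x + vbar t ∧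
      (t < T → IsLeast (Set.range (g t x)) (F t x)) :=
  future_stress_backward_induction_general n p T σ hσ A B fbar Ω hΩ_pd lxx lux luu lx lu l hl F g hg
    hFT hFt V v vbar M N Qx Qu Quu Qux Qxx hVT hvT hvbarT hM hN hQx hQu hQuu hQux hQxx hV hv hvbar
    hV_inv hV_pd hQuu_pd
end
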